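/- arXiv:2106.13495 — 8 statements merged into one kernel-verified Lean document; each statement's English description precedes it below -/
import Mathlib

section
/- Let C be a binary constant-weight code with parameters (S, N, W, K) with 0 ≤ K < W ≤ S. Define J(S', W', 0) = ⌊S'/W'⌋ and J(S', W', K') = ⌊(S'/W') · J(S'−1, W'−1, K'−1)⌋ for K' ≥ 1. Then N ≤ J(S, W, K), i.e., N ≤ ⌊(S/W)·⌊((S−1)/(W−1))·⌊ … ⌊(S−K)/(W−K)⌋ … ⌋⌋⌋. -/
open Finset Function

/-- Hamming weight of a binary vector. -/
def cwWeight {σ : Type*} [Fintype σ] (a : σ → Bool) : ℕ :=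
  (Finset.univ.filter (fun s => a s = true)).card

/-- Overlap (number of common 1-coordinates) of two binary vectors. -/
def cwOverlap {σ : Type*} [Fintype σ] (a b : σ → Bool) : ℕ :=
  (Finset.univ.filter (fun s => a s = true ∧ b s = true)).card

/-- A binary constant-weight code with weight `W` and maximum pairwise overlap `K`:
the codewords are distinct, each has Hamming weight `W`, and every pair of distinct
codewords has overlap at most `K`. -/
def IsCWC {ι σ : Type*} [Fintype σ] (W K : ℕ) (x : ι → σ → Bool) : Prop :=
  Function.Injective x ∧ (∀ j, cwWeight (x j) = W) ∧
    ∀ j j', j ≠ j' → cwOverlap (x j) (x j') ≤ K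

/-- The Johnson-type bound `J(S, W, K)`:
`J(S, W, 0) = ⌊S / W⌋` and `J(S, W, K+1) = ⌊(S / W) * J(S-1, W-1, K)⌋`. -/
def johnsonBound : ℕ → ℕ → ℕ → ℕ
  | S, W, 0 => S / W
  | S, W, K + 1 => S * johnsonBound (S - 1) (W - 1) K / W

/-- Auxiliary Finset version of the Johnson bound. -/
lemma johnson_aux : ∀ (K W : ℕ) {σ : Type*} [DecidableEq σ] (T : Finset σ)
    (𝒜 : Finset (Finset σ)), K < W →
    (∀ A ∈ 𝒜, A ⊆ T) → (∀ A ∈ 𝒜, A.card = W) →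
    (∀ A ∈ 𝒜, ∀ B ∈ 𝒜, A ≠ B → (A ∩ B).card ≤ K) →
    𝒜.card ≤ johnsonBound T.card W K := by
  intro K
  induction K with
  | zero =>
    intro W σ _ T 𝒜 hW hsub hcard hinter
    show 𝒜.card ≤ T.card / W
    rw [Nat.le_div_iff_mul_le hW]
    have hdisj : ∀ A ∈ 𝒜, ∀ B ∈ 𝒜, A ≠ B → Disjoint A B := by
      intro A hA B hB hne
      have := hinter A hA B hB hne
      exact Finset.disjoint_iff_inter_eq_empty.2
        (Finset.card_eq_zero.1 (Nat.le_zero.1 this))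
    have hbu : (𝒜.biUnion id).card = ∑ A ∈ 𝒜, A.card :=
      Finset.card_biUnion (fun A hA B hB hne => hdisj A hA B hB hne)
    have hsum : ∑ A ∈ 𝒜, A.card = 𝒜.card * W := by
      rw [Finset.sum_congr rfl hcard, Finset.sum_const, smul_eq_mul]
    have hsubT : 𝒜.biUnion id ⊆ T := by
      intro a ha
      rcases Finset.mem_biUnion.1 ha with ⟨A, hA, haA⟩
      exact hsub A hA haA
    calc 𝒜.card * W = (𝒜.biUnion id).card := by rw [hbu, hsum]
      _ ≤ T.card := Finset.card_le_card hsubT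
  | succ K ih =>
    intro W σ _ T 𝒜 hW hsub hcard hinter
    show 𝒜.card ≤ T.card * johnsonBound (T.card - 1) (W - 1) K / W
    have hW0 : 0 < W := by omega
    rw [Nat.le_div_iff_mul_le hW0]
    have key : ∀ s ∈ T, (𝒜.filter (fun A => s ∈ A)).card ≤
        johnsonBound (T.card - 1) (W - 1) K := by
      intro s hs
      have hinj : Set.InjOn (fun A : Finset σ => A.erase s)
          ↑(𝒜.filter (fun A => s ∈ A)) := by
        intro A hA B hB h
        simp only [Finset.coe_filter, Set.mem_setOf_eq] at hA hB
        have h2 := congrArg (insert s) h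
        simpa [Finset.insert_erase hA.2, Finset.insert_erase hB.2] using h2
      set ℬ := (𝒜.filter (fun A => s ∈ A)).image (fun A => A.erase s) with hℬ
      have hcardB : ℬ.card = (𝒜.filter (fun A => s ∈ A)).card :=
        Finset.card_image_of_injOn hinj
      have hTe : (T.erase s).card = T.card - 1 := Finset.card_erase_of_mem hs
      rw [← hcardB, ← hTe]
      apply ih (W - 1) (T.erase s) ℬ (by omega)
      · intro B hB
        simp only [hℬ, Finset.mem_image, Finset.mem_filter] at hB
        obtain ⟨A, ⟨hA, hsA⟩, rfl⟩ := hB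
        exact Finset.erase_subset_erase s (hsub A hA)
      · intro B hB
        simp only [hℬ, Finset.mem_image, Finset.mem_filter] at hB
        obtain ⟨A, ⟨hA, hsA⟩, rfl⟩ := hB
        rw [Finset.card_erase_of_mem hsA, hcard A hA]
      · intro B hB B' hB' hne
        simp only [hℬ, Finset.mem_image, Finset.mem_filter] at hB hB'
        obtain ⟨A, ⟨hA, hsA⟩, rfl⟩ := hB
        obtain ⟨A', ⟨hA', hsA'⟩, rfl⟩ := hB'
        have hAA' : A ≠ A' := fun h => hne (by rw [h])
        have h1 := hinter A hA A' hA' hAA'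
        have hsAA : s ∈ A ∩ A' := Finset.mem_inter.2 ⟨hsA, hsA'⟩
        have : A.erase s ∩ A'.erase s = (A ∩ A').erase s := by
          rw [Finset.erase_inter, Finset.inter_erase, Finset.erase_idem]
        rw [this, Finset.card_erase_of_mem hsAA]
        omega
    have count : ∑ s ∈ T, (𝒜.filter (fun A => s ∈ A)).card = 𝒜.card * W := by
      have : ∀ s, (𝒜.filter (fun A => s ∈ A)).card =
          ∑ A ∈ 𝒜, if s ∈ A then 1 else 0 := by
        intro s; exact (Finset.sum_boole _ _).symm
      rw [Finset.sum_congr rfl (fun s _ => this s), Finset.sum_comm]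
      have : ∀ A ∈ 𝒜, (∑ s ∈ T, if s ∈ A then 1 else 0) = W := by
        intro A hA
        rw [Finset.sum_boole, Finset.filter_mem_eq_inter,
          Finset.inter_eq_right.2 (hsub A hA)]
        exact hcard A hA
      rw [Finset.sum_congr rfl this, Finset.sum_const, smul_eq_mul]
    calc 𝒜.card * W = ∑ s ∈ T, (𝒜.filter (fun A => s ∈ A)).card := count.symm
      _ ≤ ∑ _s ∈ T, johnsonBound (T.card - 1) (W - 1) K := Finset.sum_le_sum key
      _ = T.card * johnsonBound (T.card - 1) (W - 1) K := by
          rw [Finset.sum_const, smul_eq_mul]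

/-- Unrestricted-Johnson-type upper bound on the size of a binary
constant-weight code: `N ≤ ⌊(S/W)⌊((S-1)/(W-1))⌊…⌊(S-K)/(W-K)⌋…⌋⌋⌋`. -/
theorem cwc_johnson_bound {S N W K : ℕ} (x : Fin N → Fin S → Bool)
    (hKW : K < W) (hWS : W ≤ S) (hC : IsCWC W K x) :
    N ≤ johnsonBound S W K := by
  obtain ⟨hinj, hwt, hov⟩ := hC
  set f : Fin N → Finset (Fin S) := fun j => Finset.univ.filter (fun s => x j s = true)
    with hf
  have hfinj : Function.Injective f := by
    intro j j' h
    apply hinj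
    funext s
    have : (s ∈ f j) = (s ∈ f j') := by rw [h]
    simp only [hf, Finset.mem_filter, Finset.mem_univ, true_and, eq_iff_iff] at this
    cases hxy : x j s <;> cases hxy' : x j' s <;> simp_all
  set 𝒜 : Finset (Finset (Fin S)) := Finset.univ.image f with h𝒜
  have hcard𝒜 : 𝒜.card = N := by
    rw [h𝒜, Finset.card_image_of_injective _ hfinj, Finset.card_univ, Fintype.card_fin]
  have := johnson_aux K W (Finset.univ : Finset (Fin S)) 𝒜 hKW
    (fun A _ => Finset.subset_univ A)
    (by
      intro A hA
      rw [h𝒜, Finset.mem_image] at hA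
      obtain ⟨j, _, rfl⟩ := hA
      exact hwt j)
    (by
      intro A hA B hB hne
      rw [h𝒜, Finset.mem_image] at hA hB
      obtain ⟨j, _, rfl⟩ := hA
      obtain ⟨j', _, rfl⟩ := hB
      have hjj' : j ≠ j' := fun h => hne (by rw [h])
      have : f j ∩ f j' = Finset.univ.filter (fun s => x j s = true ∧ x j' s = true) := by
        rw [hf]; rw [← Finset.filter_and]
      rw [this]
      exact hov j j' hjj')
  rwa [hcard𝒜, Finset.card_univ, Fintype.card_fin] at this
end

section
/- Let x_1, …, x_N be N binary vectors of length S, each of Hamming weight W, with 1 ≤ W ≤ S, and let γ_{j,j'} = Σ_{s=0}^{S−1} x_{j,s} x_{j',s} (so γ_{j,j} = W). Then for every integer ℓ ≥ 1, Σ_{j=1}^{N} Σ_{j'=1}^{N} γ_{j,j'}^ℓ ≥ N² · Σ_{u=1}^{ℓ} ( C(W,u)² · C_{ℓ,u} / C(S,u) ), where C(a,b) denotes the binomial coefficient and C_{ℓ,u} = Σ_{k=0}^{u} (−1)^k C(u,k) (u−k)^ℓ. -/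
/-!
Write `C_{ℓ,u} = Δ^u[r ↦ r^ℓ](0)` for the `u`-th forward difference at `0`. Newton's formula gives
`m^ℓ = ∑_u C(m,u) C_{ℓ,u}`, and `C_{ℓ,u} ≥ 0` because the functions whose iterated differences are
all nonnegative on `[0, ∞)` are closed under products (Leibniz rule for `Δ`).
Since `C(#(A ∩ B), u)` counts the `u`-sets contained in both `A` and `B`, we get
`∑_{j,j'} C(γ_{j,j'}, u) = ∑_{#T = u} n_T²`, where `n_T` is the number of supports containing `T`.
As `∑_T n_T = N C(W,u)`, Cauchy–Schwarz over the `C(S,u)` sets `T` gives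
`∑_T n_T² ≥ (N C(W,u))² / C(S,u)`; multiply by `C_{ℓ,u} ≥ 0` and sum over `u`
(the `u = 0` term is nonnegative, so it may be dropped).
-/

open Finset Function

open fwdDiff

section FwdDiff
variable {R : Type*} [CommRing R]

theorem sum_alternating_choose_mul_pow_eq_fwdDiff_iter (ℓ u : ℕ) :
    ∑ k ∈ range (u + 1), (-1 : R) ^ k * (u.choose k : R) * ((u - k : ℕ) : R) ^ ℓ =
      Δ_[1] ^[u] (fun r : R ↦ r ^ ℓ) 0 := by
  rw [fwdDiff_iter_eq_sum_shift, ← sum_range_reflect]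
  refine sum_congr rfl fun k hk ↦ ?_
  have hk : k ≤ u := Nat.lt_succ_iff.mp (mem_range.mp hk)
  rw [Nat.add_sub_cancel, Nat.sub_sub_self hk, Nat.choose_symm hk, zero_add, nsmul_one,
    zsmul_eq_mul]
  push_cast
  ring

theorem natCast_pow_eq_sum_choose_mul_fwdDiff_iter (m ℓ : ℕ) :
    (m : R) ^ ℓ = ∑ u ∈ range (ℓ + 1), (m.choose u : R) * Δ_[1] ^[u] (fun r : R ↦ r ^ ℓ) 0 := by
  have newton := shift_eq_sum_fwdDiff_iter (1 : R) (fun r : R ↦ r ^ ℓ) m 0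
  rw [zero_add, nsmul_one] at newton
  rw [newton]
  simp only [nsmul_eq_mul]
  have hm : ∀ u ∉ range (m + 1), (m.choose u : R) * Δ_[1] ^[u] (fun r : R ↦ r ^ ℓ) 0 = 0 :=
    fun u hu ↦ by rw [Nat.choose_eq_zero_of_lt (by simpa using hu), Nat.cast_zero, zero_mul]
  have hl : ∀ u ∉ range (ℓ + 1), (m.choose u : R) * Δ_[1] ^[u] (fun r : R ↦ r ^ ℓ) 0 = 0 :=
    fun u hu ↦ by rw [fwdDiff_iter_pow_eq_zero_of_lt (by simpa using hu), Pi.zero_apply, mul_zero]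
  rw [sum_subset (subset_union_left (s₂ := range (ℓ + 1))) (fun u _ hu ↦ hm u hu),
    sum_subset (subset_union_right (s₁ := range (m + 1))) (fun u _ hu ↦ hl u hu)]

end FwdDiff

section AbsolutelyMonotone
variable {R : Type*} [CommRing R] [PartialOrder R]

def AbsolutelyMonotone (f : R → R) : Prop :=
  ∀ k y, 0 ≤ y → 0 ≤ Δ_[1] ^[k] f y

theorem AbsolutelyMonotone.fwdDiff {f : R → R} (hf : AbsolutelyMonotone f) :
    AbsolutelyMonotone (Δ_[1] f) :=
  fun k y hy ↦ by simpa only [← iterate_succ_apply] using hf (k + 1) y hy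

theorem absolutelyMonotone_const {c : R} (hc : 0 ≤ c) : AbsolutelyMonotone (fun _ : R ↦ c) := by
  rintro (_ | k) y -
  · exact hc
  · rw [iterate_succ_apply, fwdDiff_const, iterate_fixed (fwdDiff_const 1 0)]

variable [IsOrderedRing R]

theorem AbsolutelyMonotone.mul {f g : R → R} (hf : AbsolutelyMonotone f)
    (hg : AbsolutelyMonotone g) : AbsolutelyMonotone (f * g) := by
  intro k
  induction k generalizing f g with
  | zero => exact fun y hy ↦ mul_nonneg (hf 0 y hy) (hg 0 y hy)
  | succ k ih =>
    have leibniz : Δ_[1] (f * g) = Δ_[1] f * g + f * Δ_[1] g + Δ_[1] f * Δ_[1] g :=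
      fwdDiff_smul 1 f g
    intro y hy
    rw [iterate_succ_apply, leibniz, fwdDiff_iter_add, fwdDiff_iter_add]
    exact add_nonneg (add_nonneg (ih hf.fwdDiff hg y hy) (ih hf hg.fwdDiff y hy))
      (ih hf.fwdDiff hg.fwdDiff y hy)

theorem absolutelyMonotone_id : AbsolutelyMonotone (id : R → R) := by
  rintro (_ | k) y hy
  · exact hy
  · have : Δ_[1] (id : R → R) = fun _ ↦ 1 := funext fun y ↦ add_sub_cancel_left y 1
    rw [iterate_succ_apply, this]
    exact absolutelyMonotone_const zero_le_one k y hy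

theorem absolutelyMonotone_pow (ℓ : ℕ) : AbsolutelyMonotone (fun r : R ↦ r ^ ℓ) := by
  induction ℓ with
  | zero => simpa only [pow_zero] using absolutelyMonotone_const zero_le_one
  | succ ℓ ih =>
    have : (fun r : R ↦ r ^ (ℓ + 1)) = (fun r ↦ r ^ ℓ) * id := funext fun r ↦ pow_succ r ℓ
    exact this ▸ ih.mul absolutelyMonotone_id

end AbsolutelyMonotone

section DoubleCounting
variable {ι α : Type*} [Fintype ι] [Fintype α] [DecidableEq α] (A : ι → Finset α) (u : ℕ)

theorem card_filter_subset_powersetCard_univ (s : Finset α) :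
    #{T ∈ powersetCard u univ | T ⊆ s} = (#s).choose u := by
  rw [← card_powersetCard]
  congr 1
  ext T
  simp only [mem_filter, mem_powersetCard, subset_univ, true_and]
  tauto

theorem sum_card_filter_subset_eq_sum_choose :
    ∑ T ∈ powersetCard u univ, #{j | T ⊆ A j} = ∑ j, (#(A j)).choose u := by
  simp only [card_filter]
  rw [sum_comm]
  simp only [← card_filter, card_filter_subset_powersetCard_univ]

theorem sum_card_filter_subset_sq_eq_sum_sum_choose :
    ∑ T ∈ powersetCard u univ, #{j | T ⊆ A j} ^ 2 = ∑ j, ∑ j', (#(A j ∩ A j')).choose u := by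
  simp only [card_filter, sq, sum_mul_sum, ite_zero_mul_ite_zero, mul_one, ← subset_inter_iff]
  rw [sum_comm]
  refine sum_congr rfl fun j _ ↦ ?_
  rw [sum_comm]
  simp only [← card_filter, card_filter_subset_powersetCard_univ]

variable {K : Type*} [Field K] [LinearOrder K] [IsStrictOrderedRing K]

theorem sq_card_mul_choose_div_le_sum_sum_choose_card_inter {W : ℕ} (hA : ∀ j, #(A j) = W) :
    ((Fintype.card ι : K) * W.choose u) ^ 2 / (Fintype.card α).choose u ≤
      ∑ j, ∑ j', ((#(A j ∩ A j')).choose u : K) := by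
  have hsum : ∑ T ∈ powersetCard u univ, (#{j | T ⊆ A j} : K) =
      Fintype.card ι * W.choose u := by
    rw_mod_cast [sum_card_filter_subset_eq_sum_choose]
    simp only [hA, sum_const, card_univ, smul_eq_mul]
  have hsq : ∑ T ∈ powersetCard u univ, (#{j | T ⊆ A j} : K) ^ 2 =
      ∑ j, ∑ j', ((#(A j ∩ A j')).choose u : K) := by
    exact_mod_cast sum_card_filter_subset_sq_eq_sum_sum_choose A u
  have hcard : (#(powersetCard u (univ : Finset α)) : K) = (Fintype.card α).choose u := by
    rw [card_powersetCard, card_univ]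
  rw [← hsum, ← hsq, ← hcard]
  refine div_le_of_le_mul₀ (Nat.cast_nonneg _) (sum_nonneg fun _ _ ↦ sq_nonneg _) ?_
  rw [mul_comm]
  exact sq_sum_le_card_mul_sum_sq

theorem sq_card_mul_sum_le_sum_sum_card_inter_pow {W : ℕ} (hA : ∀ j, #(A j) = W) (ℓ : ℕ) :
    (Fintype.card ι : K) ^ 2 * ∑ u ∈ range (ℓ + 1),
        (W.choose u : K) ^ 2 * Δ_[1] ^[u] (fun r : K ↦ r ^ ℓ) 0 / (Fintype.card α).choose u ≤
      ∑ j, ∑ j', (#(A j ∩ A j') : K) ^ ℓ := by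
  calc _ = ∑ u ∈ range (ℓ + 1), ((Fintype.card ι : K) * W.choose u) ^ 2 /
          (Fintype.card α).choose u * Δ_[1] ^[u] (fun r : K ↦ r ^ ℓ) 0 := by
        rw [mul_sum]
        exact sum_congr rfl fun u _ ↦ by ring
    _ ≤ ∑ u ∈ range (ℓ + 1), (∑ j, ∑ j', ((#(A j ∩ A j')).choose u : K)) *
          Δ_[1] ^[u] (fun r : K ↦ r ^ ℓ) 0 :=
        sum_le_sum fun u _ ↦ mul_le_mul_of_nonneg_right
          (sq_card_mul_choose_div_le_sum_sum_choose_card_inter A u hA)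
          (absolutelyMonotone_pow ℓ u 0 le_rfl)
    _ = ∑ j, ∑ j', ∑ u ∈ range (ℓ + 1),
          ((#(A j ∩ A j')).choose u : K) * Δ_[1] ^[u] (fun r : K ↦ r ^ ℓ) 0 := by
        simp only [sum_mul]
        rw [sum_comm]
        exact sum_congr rfl fun j _ ↦ sum_comm
    _ = _ := by simp only [natCast_pow_eq_sum_choose_mul_fwdDiff_iter _ ℓ]

end DoubleCounting

theorem cwc_correlation_moment_lower_bound_general {S N W : ℕ} (x : Fin N → Fin S → Bool)
    (hwt : ∀ j, cwWeight (x j) = W)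
    (ℓ : ℕ) :
    (N : ℚ) ^ 2 * ∑ u ∈ Finset.Icc 1 ℓ,
        ((W.choose u : ℚ)) ^ 2 *
          (∑ k ∈ Finset.range (u + 1),
            (-1 : ℚ) ^ k * (u.choose k : ℚ) * (((u - k : ℕ)) : ℚ) ^ ℓ) / (S.choose u : ℚ)
      ≤ ∑ j : Fin N, ∑ j' : Fin N, ((cwOverlap (x j) (x j') : ℕ) : ℚ) ^ ℓ := by
  let A : Fin N → Finset (Fin S) := fun j ↦ {s | x j s = true}
  have hoverlap : ∀ j j', cwOverlap (x j) (x j') = #(A j ∩ A j') :=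
    fun j j' ↦ by rw [cwOverlap, filter_and]
  have hbound := sq_card_mul_sum_le_sum_sum_card_inter_pow (K := ℚ) A hwt ℓ
  simp only [Fintype.card_fin, ← hoverlap] at hbound
  refine le_trans ?_ hbound
  simp only [sum_alternating_choose_mul_pow_eq_fwdDiff_iter]
  gcongr
  · intro u _ _
    have := absolutelyMonotone_pow ℓ u (0 : ℚ) le_rfl
    positivity
  · exact fun u hu ↦ mem_range.2 (Nat.lt_succ_of_le (mem_Icc.1 hu).2)

/-- Cauchy–Schwarz lower bound on the `ℓ`-th order correlation sum of a
family of binary vectors of length `S` and constant weight `W`: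
`∑_{j,j'} γ_{j,j'}^ℓ ≥ N² ∑_{u=1}^{ℓ} C(W,u)² C_{ℓ,u} / C(S,u)`, where
`C_{ℓ,u} = ∑_{k=0}^{u} (-1)^k C(u,k) (u-k)^ℓ`. -/
theorem cwc_correlation_moment_lower_bound {S N W : ℕ} (x : Fin N → Fin S → Bool)
    (hW : 1 ≤ W) (hWS : W ≤ S) (hwt : ∀ j, cwWeight (x j) = W)
    (ℓ : ℕ) (hl : 1 ≤ ℓ) :
    (N : ℚ) ^ 2 * ∑ u ∈ Finset.Icc 1 ℓ,
        ((W.choose u : ℚ)) ^ 2 *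
          (∑ k ∈ Finset.range (u + 1),
            (-1 : ℚ) ^ k * (u.choose k : ℚ) * (((u - k : ℕ)) : ℚ) ^ ℓ) / (S.choose u : ℚ)
      ≤ ∑ j : Fin N, ∑ j' : Fin N, ((cwOverlap (x j) (x j') : ℕ) : ℚ) ^ ℓ :=
  cwc_correlation_moment_lower_bound_general x hwt ℓ
end

section
/- Let C be a binary constant-weight code with parameters (S, N, W, K) with 0 ≤ K < W ≤ S, let ℓ ≥ 1 be an integer, and set A = Σ_{u=1}^{ℓ} ( C(W,u)² · C_{ℓ,u} / C(S,u) ), where C_{ℓ,u} = Σ_{k=0}^{u} (−1)^k C(u,k) (u−k)^ℓ. If A > K^ℓ, then N ≤ (W^ℓ − K^ℓ) / (A − K^ℓ). -/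
open Finset Function

/-!
Double counting of `ℓ`-tuples of coordinates. The power `γ_{j,j'}^ℓ` counts the tuples
`p : Fin ℓ → Fin S` lying in the common support of `x_j` and `x_{j'}`, so
`T = ∑_{j,j'} γ_{j,j'}^ℓ = ∑_p m(p)²`, where `m(p)` is the number of codewords whose support
contains the values of `p`. Grouping the tuples by their set of values `V`, exactly `C_{ℓ,|V|}`
tuples have value set `V` (inclusion–exclusion for surjections), and on each layer `|V| = u`
Cauchy–Schwarz together with `∑_V m(V) = N C(W,u)` gives `T ≥ N² A`. On the other hand the
diagonal contributes `N W^ℓ` and each off-diagonal term is at most `K^ℓ`, so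
`N² A ≤ N W^ℓ + N (N - 1) K^ℓ`, which rearranges to the bound.
-/

-- The paper's `C_{n,u}`.
def surjectionCount (n u : ℕ) : ℚ :=
  ∑ k ∈ range (u + 1), (-1) ^ k * (u.choose k : ℚ) * ((u - k : ℕ) : ℚ) ^ n

section Surjections

variable (α β : Type*) [Fintype α] [DecidableEq α] [Fintype β] [DecidableEq β]

theorem card_surjective_eq_surjectionCount :
    (#{f : α → β | Surjective f} : ℚ) = surjectionCount (Fintype.card α) (Fintype.card β) := by
  have hsurj : ({f : α → β | Surjective f} : Finset (α → β)) =
      univ.inf fun b => ({f | b ∉ Set.range f} : Finset (α → β))ᶜ := by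
    ext f
    simp only [mem_filter, mem_univ, true_and, Finset.mem_inf, mem_compl, not_not, forall_const]
    rfl
  have hmiss (t : Finset β) : (t.inf fun b => ({f | b ∉ Set.range f} : Finset (α → β))) =
      Fintype.piFinset fun _ => tᶜ := by
    ext f
    simp only [Finset.mem_inf, mem_filter, mem_univ, true_and, Set.mem_range, not_exists,
      Fintype.mem_piFinset, mem_compl]
    exact ⟨fun h a ha => h _ ha a rfl, fun h b hb a hab => h a (hab ▸ hb)⟩
  have hint : (#{f : α → β | Surjective f} : ℤ) =
      ∑ k ∈ range (Fintype.card β + 1), (-1) ^ k * ((Fintype.card β).choose k : ℤ) *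
        ((Fintype.card β - k : ℕ) : ℤ) ^ Fintype.card α := by
    rw [hsurj, inclusion_exclusion_card_inf_compl]
    simp_rw [hmiss, Fintype.card_piFinset, prod_const, card_univ, card_compl, Nat.cast_pow]
    rw [sum_powerset_apply_card
      (fun m => (-1 : ℤ) ^ m * ((Fintype.card β - m : ℕ) : ℤ) ^ Fintype.card α)]
    simp [card_univ, mul_assoc, mul_left_comm]
  rw [surjectionCount]
  exact_mod_cast congrArg (Int.cast : ℤ → ℚ) hint

theorem surjectionCount_nonneg (n u : ℕ) : 0 ≤ surjectionCount n u := by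
  simpa using
    (card_surjective_eq_surjectionCount (Fin n) (Fin u)).symm.trans_ge (Nat.cast_nonneg _)

variable {α β}

theorem card_image_eq_card_surjective (V : Finset β) :
    #{f : α → β | univ.image f = V} = #{g : α → V | Surjective g} := by
  refine card_bij' (fun f hf a => ⟨f a, (mem_filter.1 hf).2 ▸ mem_image_of_mem f (mem_univ a)⟩)
    (fun g _ a => (g a : β)) ?_ ?_ (fun _ _ => rfl) (fun _ _ => rfl)
  · intro f hf
    simp only [mem_filter, mem_univ, true_and] at hf ⊢
    rintro ⟨b, hb⟩
    obtain ⟨a, -, rfl⟩ := mem_image.1 (hf ▸ hb)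
    exact ⟨a, rfl⟩
  · intro g hg
    simp only [mem_filter, mem_univ, true_and] at hg ⊢
    ext b
    refine ⟨fun hb => ?_, fun hb => ?_⟩
    · obtain ⟨a, -, rfl⟩ := mem_image.1 hb
      exact (g a).2
    · obtain ⟨a, ha⟩ := hg ⟨b, hb⟩
      exact mem_image.2 ⟨a, mem_univ a, congrArg Subtype.val ha⟩

theorem card_image_eq_surjectionCount (V : Finset β) :
    (#{f : α → β | univ.image f = V} : ℚ) = surjectionCount (Fintype.card α) #V := by
  rw [card_image_eq_card_surjective, card_surjective_eq_surjectionCount, Fintype.card_coe]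

end Surjections

section Code

variable {ι σ : Type*} [Fintype ι] [Fintype σ]

def cwCoverCount (x : ι → σ → Bool) (V : Finset σ) : ℕ :=
  #{j | ∀ s ∈ V, x j s = true}

theorem cwOverlap_self (a : σ → Bool) : cwOverlap a a = cwWeight a := by
  simp [cwOverlap, cwWeight]

theorem cwOverlap_pow_card (α : Type*) [Fintype α] [DecidableEq α] (a b : σ → Bool) :
    cwOverlap a b ^ Fintype.card α = #{p : α → σ | ∀ i, a (p i) = true ∧ b (p i) = true} := by
  have hpi : ({p | ∀ i, a (p i) = true ∧ b (p i) = true} : Finset (α → σ)) =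
      Fintype.piFinset fun _ => {s | a s = true ∧ b s = true} := by
    ext p
    simp
  rw [hpi, Fintype.card_piFinset, prod_const, card_univ, cwOverlap]

theorem sum_cwOverlap_pow_le {x : ι → σ → Bool} {W K : ℕ} (hw : ∀ j, cwWeight (x j) = W)
    (hK : ∀ j j', j ≠ j' → cwOverlap (x j) (x j') ≤ K) (n : ℕ) :
    ∑ j, ∑ j', (cwOverlap (x j) (x j') : ℚ) ^ n ≤
      Fintype.card ι * ((W : ℚ) ^ n + (Fintype.card ι - 1) * (K : ℚ) ^ n) := by
  classical
  have hrow (j : ι) :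
      ∑ j', (cwOverlap (x j) (x j') : ℚ) ^ n ≤ W ^ n + (Fintype.card ι - 1) * (K : ℚ) ^ n := by
    rw [← add_sum_erase _ _ (mem_univ j), cwOverlap_self, hw]
    gcongr
    calc ∑ j' ∈ univ.erase j, (cwOverlap (x j) (x j') : ℚ) ^ n
        ≤ #(univ.erase j) • (K : ℚ) ^ n := sum_le_card_nsmul _ _ _ fun j' hj' => by
          gcongr
          exact_mod_cast hK j j' (ne_of_mem_erase hj').symm
      _ = (Fintype.card ι - 1) * (K : ℚ) ^ n := by
          rw [card_erase_of_mem (mem_univ j), card_univ, nsmul_eq_mul,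
            Nat.cast_pred (Fintype.card_pos_iff.2 ⟨j⟩)]
  refine (sum_le_sum fun j _ => hrow j).trans_eq ?_
  rw [sum_const, card_univ, nsmul_eq_mul]

variable [DecidableEq σ]

theorem sum_cwOverlap_pow_eq_sum_cwCoverCount_sq (α : Type*) [Fintype α] [DecidableEq α]
    (x : ι → σ → Bool) :
    ∑ j, ∑ j', cwOverlap (x j) (x j') ^ Fintype.card α =
      ∑ p : α → σ, cwCoverCount x (univ.image p) ^ 2 := by
  have hcover (p : α → σ) :
      cwCoverCount x (univ.image p) = ∑ j, if ∀ i, x j (p i) = true then 1 else 0 := by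
    simp only [cwCoverCount, card_filter, forall_mem_image, mem_univ, forall_const]
  simp_rw [cwOverlap_pow_card, card_filter, forall_and, ite_and, hcover, sq, sum_mul_sum,
    boole_mul]
  rw [sum_congr rfl fun _ _ => sum_comm, sum_comm]

theorem sum_cwOverlap_pow_eq_sum_surjectionCount (x : ι → σ → Bool) (n : ℕ) :
    ∑ j, ∑ j', (cwOverlap (x j) (x j') : ℚ) ^ n =
      ∑ V : Finset σ, surjectionCount n #V * (cwCoverCount x V : ℚ) ^ 2 := by
  have h := congrArg (Nat.cast : ℕ → ℚ) (sum_cwOverlap_pow_eq_sum_cwCoverCount_sq (Fin n) x)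
  push_cast at h
  rw [Fintype.card_fin] at h
  rw [h, ← sum_fiberwise' univ (fun p : Fin n → σ => univ.image p)
    fun V => (cwCoverCount x V : ℚ) ^ 2]
  refine sum_congr rfl fun V _ => ?_
  rw [sum_const, nsmul_eq_mul, card_image_eq_surjectionCount, Fintype.card_fin]

theorem sum_powersetCard_cwCoverCount (x : ι → σ → Bool) (u : ℕ) :
    ∑ V ∈ powersetCard u univ, cwCoverCount x V = ∑ j, (cwWeight (x j)).choose u := by
  calc ∑ V ∈ powersetCard u univ, cwCoverCount x V
      = ∑ j, #{V ∈ powersetCard u univ | ∀ s ∈ V, x j s = true} := by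
        simp only [cwCoverCount, card_filter]
        rw [sum_comm]
        congr!
    _ = _ := sum_congr rfl fun j _ => by
        rw [cwWeight, ← card_powersetCard]
        congr 1
        ext V
        simp [mem_powersetCard, subset_iff, and_comm]

-- Cauchy–Schwarz on the layer `#V = u`; for `u > card σ` the left side is `_ / 0 = 0`.
theorem sq_card_mul_choose_div_le_sum_sq {x : ι → σ → Bool} {W : ℕ}
    (hw : ∀ j, cwWeight (x j) = W) (u : ℕ) :
    ((Fintype.card ι * W.choose u : ℕ) : ℚ) ^ 2 / (Fintype.card σ).choose u ≤
      ∑ V ∈ powersetCard u univ, (cwCoverCount x V : ℚ) ^ 2 := by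
  have hsum : ∑ V ∈ powersetCard u univ, (cwCoverCount x V : ℚ) =
      (Fintype.card ι * W.choose u : ℕ) := by
    exact_mod_cast (sum_powersetCard_cwCoverCount x u).trans (by simp [hw])
  rw [← hsum]
  refine div_le_of_le_mul₀ (Nat.cast_nonneg _) (sum_nonneg fun _ _ => sq_nonneg _) ?_
  rw [mul_comm]
  simpa [card_powersetCard] using sq_sum_le_card_mul_sum_sq (s := powersetCard u univ)
    (f := fun V => (cwCoverCount x V : ℚ))

theorem card_sq_mul_sum_le_sum_cwOverlap_pow {x : ι → σ → Bool} {W : ℕ}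
    (hw : ∀ j, cwWeight (x j) = W) (s : Finset ℕ) (n : ℕ) :
    (Fintype.card ι : ℚ) ^ 2 *
        ∑ u ∈ s, (W.choose u : ℚ) ^ 2 * surjectionCount n u / (Fintype.card σ).choose u ≤
      ∑ j, ∑ j', (cwOverlap (x j) (x j') : ℚ) ^ n := by
  rw [sum_cwOverlap_pow_eq_sum_surjectionCount, mul_sum]
  calc _ ≤ ∑ u ∈ s, ∑ V ∈ powersetCard u univ,
          surjectionCount n #V * (cwCoverCount x V : ℚ) ^ 2 := by
        refine sum_le_sum fun u _ => ?_
        rw [sum_congr rfl fun V hV => by rw [(mem_powersetCard.1 hV).2], ← mul_sum]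
        have := mul_le_mul_of_nonneg_left (sq_card_mul_choose_div_le_sum_sq hw u)
          (surjectionCount_nonneg n u)
        convert this using 1
        push_cast
        ring
    _ ≤ _ := by
        simp_rw [powersetCard_eq_filter, powerset_univ]
        rw [sum_fiberwise_eq_sum_filter]
        exact sum_le_sum_of_subset_of_nonneg (filter_subset _ _) fun V _ _ =>
          mul_nonneg (surjectionCount_nonneg _ _) (sq_nonneg _)

end Code

theorem cwc_correlation_moment_bound_general {S N W K : ℕ} (x : Fin N → Fin S → Bool)
    (hKW : K < W) (hC : IsCWC W K x)
    (ℓ : ℕ) (A : ℚ)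
    (hA : A = ∑ u ∈ Finset.Icc 1 ℓ,
        ((W.choose u : ℚ)) ^ 2 *
          (∑ k ∈ Finset.range (u + 1),
            (-1 : ℚ) ^ k * (u.choose k : ℚ) * (((u - k : ℕ)) : ℚ) ^ ℓ) / (S.choose u : ℚ))
    (hAK : (K : ℚ) ^ ℓ < A) :
    (N : ℚ) ≤ ((W : ℚ) ^ ℓ - (K : ℚ) ^ ℓ) / (A - (K : ℚ) ^ ℓ) := by
  obtain ⟨-, hw, hK⟩ := hC
  have hgap : 0 < A - (K : ℚ) ^ ℓ := sub_pos.2 hAK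
  rcases N.eq_zero_or_pos with rfl | hN
  · have hKW' : (K : ℚ) ^ ℓ ≤ (W : ℚ) ^ ℓ := by gcongr
    simpa using div_nonneg (sub_nonneg.2 hKW') hgap.le
  have hmoment : (N : ℚ) ^ 2 * A ≤ N * ((W : ℚ) ^ ℓ + (N - 1) * (K : ℚ) ^ ℓ) := by
    have lower := card_sq_mul_sum_le_sum_cwOverlap_pow hw (Icc 1 ℓ) ℓ
    have upper := sum_cwOverlap_pow_le hw hK ℓ
    simp only [Fintype.card_fin, surjectionCount, ← hA] at lower upper
    exact lower.trans upper
  have hN' : (0 : ℚ) < N := by exact_mod_cast hN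
  rw [le_div_iff₀ hgap]
  nlinarith

/-- Correlation-moment upper bound on the size of a binary constant-weight
code: with `A = ∑_{u=1}^{ℓ} C(W,u)² C_{ℓ,u} / C(S,u)`, if `A > K^ℓ` then
`N ≤ (W^ℓ - K^ℓ) / (A - K^ℓ)`. -/
theorem cwc_correlation_moment_bound {S N W K : ℕ} (x : Fin N → Fin S → Bool)
    (hKW : K < W) (hWS : W ≤ S) (hC : IsCWC W K x)
    (ℓ : ℕ) (hl : 1 ≤ ℓ) (A : ℚ)
    (hA : A = ∑ u ∈ Finset.Icc 1 ℓ,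
        ((W.choose u : ℚ)) ^ 2 *
          (∑ k ∈ Finset.range (u + 1),
            (-1 : ℚ) ^ k * (u.choose k : ℚ) * (((u - k : ℕ)) : ℚ) ^ ℓ) / (S.choose u : ℚ))
    (hAK : (K : ℚ) ^ ℓ < A) :
    (N : ℚ) ≤ ((W : ℚ) ^ ℓ - (K : ℚ) ^ ℓ) / (A - (K : ℚ) ^ ℓ) :=
  cwc_correlation_moment_bound_general x hKW hC ℓ A hA hAK
end

section
/- Let C be a binary constant-weight code with parameters (S, N, W, K) with 1 ≤ K < W ≤ S. Fix an integer ℓ ≥ 1 and d' ∈ [1:K], and set S' = S − d', W' = W − d', K' = K − d', and A' = Σ_{u=1}^{ℓ} ( C(W',u)² · C_{ℓ,u} / C(S',u) ), where C_{ℓ,u} = Σ_{k=0}^{u} (−1)^k C(u,k) (u−k)^ℓ. If A' > (K')^ℓ, then N ≤ ⌊(S/W)·⌊((S−1)/(W−1))·⌊ … ⌊((S'+1)/(W'+1))·⌊((W')^ℓ − (K')^ℓ)/(A' − (K')^ℓ)⌋⌋ … ⌋⌋⌋, where the nesting applies the factor (S−t)/(W−t) and a floor for t = d'−1, d'−2,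 …, 0 from the inside out. -/
/-!
Identify each codeword with its support, so that a code is a family `𝒜` of `w`-subsets of an
`n`-set whose pairwise intersections have size at most `k`.

Moment bound: the overlap moment `∑_{A,B ∈ 𝒜} |A ∩ B|^ℓ` counts triples `(A, B, f)` with
`f : Fin ℓ → A ∩ B`, so it equals `∑_f deg(im f)²`, where `deg U` is the number of members of
`𝒜` containing `U`. Exactly `C_{ℓ,u}` tuples have a given image of size `u`, and on the layer of
`u`-sets `∑ deg = |𝒜| C(w,u)`, so Cauchy–Schwarz bounds the moment below by `|𝒜|² A`. Bounding it
above by `|𝒜| w^ℓ + |𝒜|(|𝒜| - 1) k^ℓ` gives `|𝒜| ≤ (w^ℓ - k^ℓ) / (A - k^ℓ)`.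

Johnson recursion: the members through a fixed point `s`, with `s` deleted, form a family with
parameters `(n - 1, w - 1, k - 1)`, and double counting incidences gives
`|𝒜| w ≤ n · max_s |{A ∈ 𝒜 | s ∈ A}|`. Starting from the moment bound at `(S', W', K')` and
applying this `d'` times yields the nested floors.
-/

open Finset Function

section

variable {α : Type*} [DecidableEq α]

/-- The paper's `C_{ℓ,u}`: the number of surjections from an `ℓ`-set onto a `u`-set. -/
def surjCount (ℓ u : ℕ) : ℤ :=
  ∑ k ∈ range (u + 1), (-1) ^ k * u.choose k * ((u - k : ℕ) : ℤ) ^ ℓ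

theorem card_filter_forall_mem [Fintype α] (ℓ : ℕ) (V : Finset α) :
    #{f : Fin ℓ → α | ∀ i, f i ∈ V} = #V ^ ℓ := by
  rw [← Fintype.card_piFinset_const]
  congr 1
  ext f
  simp

theorem card_filter_image_eq_surjCount [Fintype α] (ℓ : ℕ) (U : Finset α) :
    (#{f : Fin ℓ → α | image f univ = U} : ℤ) = surjCount ℓ #U := by
  -- inclusion–exclusion over the points of `U` missed by `f`, among tuples with image in `U`
  set avoid : α → Finset (Fin ℓ → α) := fun a => {f | ∀ i, f i ≠ a}
  have mem_inf_avoid (t : Finset α) (f : Fin ℓ → α) : f ∈ t.inf avoid ↔ ∀ i, f i ∉ t := by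
    rw [← singleton_subset_iff, Finset.le_inf_iff]
    simp [avoid]
    grind
  have mem_inf_compl (f : Fin ℓ → α) : f ∈ U.inf (fun a => (avoid a)ᶜ) ↔ U ⊆ image f univ := by
    rw [← singleton_subset_iff, Finset.le_inf_iff]
    simp [avoid, subset_iff]
  have inner (t) (ht : t ∈ U.powerset) :
      (-1 : ℤ) ^ #t • ∑ f ∈ t.inf avoid, (if image f univ ⊆ U then 1 else 0)
        = (-1) ^ #t * ((#U - #t : ℕ) : ℤ) ^ ℓ := by
    rw [sum_boole, smul_eq_mul, ← card_sdiff_of_subset (mem_powerset.1 ht), ← Nat.cast_pow,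
      ← card_filter_forall_mem]
    congr 3
    ext f
    simp [mem_inf_avoid, image_subset_iff]
    grind
  have incl_excl := inclusion_exclusion_sum_inf_compl U avoid
    (fun f => if image f univ ⊆ U then (1 : ℤ) else 0)
  rw [sum_congr rfl inner, sum_boole,
    sum_powerset_apply_card (fun m => (-1 : ℤ) ^ m * ((#U - m : ℕ) : ℤ) ^ ℓ)] at incl_excl
  have image_eq : ({f | image f univ = U} : Finset (Fin ℓ → α))
      = {f ∈ U.inf fun a => (avoid a)ᶜ | image f univ ⊆ U} := by
    ext f
    simp [mem_inf_compl, subset_antisymm_iff, and_comm]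
  rw [image_eq, incl_excl, surjCount]
  refine sum_congr rfl fun k _ => ?_
  rw [nsmul_eq_mul]
  ring

theorem surjCount_nonneg (ℓ u : ℕ) : 0 ≤ surjCount ℓ u := by
  have := card_filter_image_eq_surjCount ℓ (univ : Finset (Fin u))
  rw [card_univ, Fintype.card_fin] at this
  exact this ▸ Int.natCast_nonneg _

theorem sum_sum_card_inter_pow_eq_sum_sq [Fintype α] (𝒜 : Finset (Finset α)) (ℓ : ℕ) :
    ∑ A ∈ 𝒜, ∑ B ∈ 𝒜, #(A ∩ B) ^ ℓ = ∑ f : Fin ℓ → α, #{A ∈ 𝒜 | image f univ ⊆ A} ^ 2 := by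
  have pow_eq (A B : Finset α) : #(A ∩ B) ^ ℓ
      = ∑ f : Fin ℓ → α,
          (if image f univ ⊆ A then 1 else 0) * (if image f univ ⊆ B then 1 else 0) := by
    rw [← card_filter_forall_mem, card_filter]
    refine sum_congr rfl fun f _ => ?_
    simp only [image_subset_iff, mem_univ, true_implies, mem_inter, forall_and,
      ite_zero_mul_ite_zero, mul_one]
  simp_rw [pow_eq, sq, card_filter, sum_mul_sum]
  conv_rhs => rw [sum_comm]
  exact sum_congr rfl fun A _ => sum_comm

theorem sum_card_filter_image_subset_sq_eq [Fintype α] {X : Finset α} {𝒜 : Finset (Finset α)}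
    (h𝒜 : ∀ A ∈ 𝒜, A ⊆ X) (ℓ : ℕ) :
    ∑ f : Fin ℓ → α, #{A ∈ 𝒜 | image f univ ⊆ A} ^ 2
      = ∑ U ∈ X.powerset, #{f : Fin ℓ → α | image f univ = U} * #{A ∈ 𝒜 | U ⊆ A} ^ 2 := by
  rw [← sum_fiberwise univ (fun f : Fin ℓ → α => image f univ)]
  symm
  refine sum_subset (subset_univ _) (fun U _ hU => ?_) |>.trans (sum_congr rfl fun U _ => ?_)
  · have : #{A ∈ 𝒜 | U ⊆ A} = 0 := by
      rw [card_eq_zero, filter_eq_empty_iff]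
      exact fun A hA hUA => hU (mem_powerset.2 (hUA.trans (h𝒜 A hA)))
    simp [this]
  · rw [card_eq_sum_ones, sum_mul, one_mul]
    exact sum_congr rfl fun f hf => by rw [(mem_filter.1 hf).2]

theorem sum_powersetCard_card_filter_subset {X : Finset α} {𝒜 : Finset (Finset α)} {w : ℕ}
    (h𝒜 : ∀ A ∈ 𝒜, A ⊆ X) (hw : ∀ A ∈ 𝒜, #A = w) (u : ℕ) :
    ∑ U ∈ X.powersetCard u, #{A ∈ 𝒜 | U ⊆ A} = #𝒜 * w.choose u := by
  have := sum_card_bipartiteAbove_eq_sum_card_bipartiteBelow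
    (s := X.powersetCard u) (t := 𝒜) (r := (· ⊆ ·))
  simp only [bipartiteAbove, bipartiteBelow] at this
  rw [this, ← smul_eq_mul, ← sum_const]
  refine sum_congr rfl fun A hA => ?_
  rw [← hw A hA, ← card_powersetCard]
  congr 1
  ext U
  simp only [mem_filter, mem_powersetCard]
  grind [h𝒜 A hA]

theorem card_mul_choose_sq_le {X : Finset α} {𝒜 : Finset (Finset α)} {w : ℕ}
    (h𝒜 : ∀ A ∈ 𝒜, A ⊆ X) (hw : ∀ A ∈ 𝒜, #A = w) (u : ℕ) :
    (#𝒜 * w.choose u) ^ 2 ≤ (#X).choose u * ∑ U ∈ X.powersetCard u, #{A ∈ 𝒜 | U ⊆ A} ^ 2 := by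
  rw [← sum_powersetCard_card_filter_subset h𝒜 hw, ← card_powersetCard]
  exact sq_sum_le_card_mul_sum_sq

/-- The paper's `A'`, for `n = S'` and `w = W'`. -/
def overlapMomentBound (n w ℓ : ℕ) : ℚ :=
  ∑ u ∈ Icc 1 ℓ, (w.choose u : ℚ) ^ 2 * surjCount ℓ u / n.choose u

theorem card_sq_mul_overlapMomentBound_le [Fintype α] {X : Finset α} {𝒜 : Finset (Finset α)}
    {w : ℕ} (h𝒜 : ∀ A ∈ 𝒜, A ⊆ X) (hw : ∀ A ∈ 𝒜, #A = w) (ℓ : ℕ) :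
    (#𝒜 : ℚ) ^ 2 * overlapMomentBound #X w ℓ ≤ ∑ A ∈ 𝒜, ∑ B ∈ 𝒜, (#(A ∩ B) : ℚ) ^ ℓ := by
  set term : ℕ → ℚ := fun u => surjCount ℓ u * ((#𝒜 * w.choose u : ℚ) ^ 2 / (#X).choose u)
  have term_nonneg (u : ℕ) : 0 ≤ term u := by
    have := surjCount_nonneg ℓ u
    positivity
  have term_le (u : ℕ) :
      term u ≤ surjCount ℓ u * ∑ U ∈ X.powersetCard u, (#{A ∈ 𝒜 | U ⊆ A} : ℚ) ^ 2 := by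
    refine mul_le_mul_of_nonneg_left ?_ (by exact_mod_cast surjCount_nonneg ℓ u)
    refine div_le_of_le_mul₀ (by positivity) (by positivity) ?_
    rw [mul_comm (∑ _ ∈ _, _)]
    exact_mod_cast card_mul_choose_sq_le h𝒜 hw u
  calc (#𝒜 : ℚ) ^ 2 * overlapMomentBound #X w ℓ = ∑ u ∈ Icc 1 ℓ, term u := by
        rw [overlapMomentBound, mul_sum]
        exact sum_congr rfl fun u _ => by ring
    _ = ∑ u ∈ Icc 1 ℓ with u ≤ #X, term u := by
        -- for `u > #X`, `term u` divides by `(#X).choose u = 0`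
        refine (sum_filter_of_ne fun u _ hu => ?_).symm
        by_contra! hXu
        simp [term, Nat.choose_eq_zero_of_lt hXu] at hu
    _ ≤ ∑ u ∈ range (#X + 1), term u := by
        refine sum_le_sum_of_subset_of_nonneg (fun u hu => ?_) fun u _ _ => term_nonneg u
        simp only [mem_filter, mem_Icc] at hu
        exact mem_range_succ_iff.2 hu.2
    _ ≤ ∑ u ∈ range (#X + 1),
          surjCount ℓ u * ∑ U ∈ X.powersetCard u, (#{A ∈ 𝒜 | U ⊆ A} : ℚ) ^ 2 :=
        sum_le_sum fun u _ => term_le u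
    _ = ∑ U ∈ X.powerset, (#{f : Fin ℓ → α | image f univ = U} : ℚ) * #{A ∈ 𝒜 | U ⊆ A} ^ 2 := by
        rw [sum_powerset]
        refine sum_congr rfl fun u _ => ?_
        rw [mul_sum]
        refine sum_congr rfl fun U hU => ?_
        rw [← (mem_powersetCard.1 hU).2, ← card_filter_image_eq_surjCount, Int.cast_natCast]
    _ = ∑ A ∈ 𝒜, ∑ B ∈ 𝒜, (#(A ∩ B) : ℚ) ^ ℓ := by
        exact_mod_cast (sum_card_filter_image_subset_sq_eq h𝒜 ℓ).symm.trans
          (sum_sum_card_inter_pow_eq_sum_sq 𝒜 ℓ).symm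

/-- A constant-weight code on the coordinate set `X`, each codeword given by its support. -/
structure IsConstWeightFamily (X : Finset α) (w k : ℕ) (𝒜 : Finset (Finset α)) : Prop where
  subset : ∀ A ∈ 𝒜, A ⊆ X
  card_eq : ∀ A ∈ 𝒜, #A = w
  card_inter_le : ∀ A ∈ 𝒜, ∀ B ∈ 𝒜, A ≠ B → #(A ∩ B) ≤ k

theorem IsConstWeightFamily.sum_card_inter_pow_le {X : Finset α} {w k : ℕ}
    {𝒜 : Finset (Finset α)} (h : IsConstWeightFamily X w k 𝒜) {A : Finset α} (hA : A ∈ 𝒜)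
    (ℓ : ℕ) : ∑ B ∈ 𝒜, #(A ∩ B) ^ ℓ ≤ w ^ ℓ + (#𝒜 - 1) * k ^ ℓ := by
  rw [← add_sum_erase _ _ hA, inter_self, h.card_eq A hA, ← card_erase_of_mem hA, ← smul_eq_mul,
    ← sum_const]
  gcongr with B hB
  exact h.card_inter_le A hA B (mem_of_mem_erase hB) (ne_of_mem_erase hB).symm

theorem IsConstWeightFamily.card_le_overlapMomentBound [Fintype α] {X : Finset α} {w k : ℕ}
    {𝒜 : Finset (Finset α)} (h : IsConstWeightFamily X w k 𝒜) (hkw : k ≤ w) {ℓ : ℕ}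
    (hM : (k : ℚ) ^ ℓ < overlapMomentBound #X w ℓ) :
    (#𝒜 : ℚ) ≤ ((w : ℚ) ^ ℓ - k ^ ℓ) / (overlapMomentBound #X w ℓ - k ^ ℓ) := by
  have hkwℓ : (k : ℚ) ^ ℓ ≤ (w : ℚ) ^ ℓ := by gcongr
  rw [le_div_iff₀ (sub_pos.2 hM)]
  obtain h𝒜 | ⟨A₀, hA₀⟩ := 𝒜.eq_empty_or_nonempty
  · simpa [h𝒜] using hkwℓ
  have hN : 1 ≤ #𝒜 := card_pos.2 ⟨A₀, hA₀⟩
  have upper :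
      ∑ A ∈ 𝒜, ∑ B ∈ 𝒜, (#(A ∩ B) : ℚ) ^ ℓ ≤ #𝒜 * ((w : ℚ) ^ ℓ + (#𝒜 - 1) * k ^ ℓ) := by
    rw [← nsmul_eq_mul]
    refine sum_le_card_nsmul _ _ _ fun A hA => ?_
    have := h.sum_card_inter_pow_le hA ℓ
    rw [← Nat.cast_le (α := ℚ)] at this
    push_cast [hN] at this
    exact this
  have lower := card_sq_mul_overlapMomentBound_le h.subset h.card_eq ℓ
  have hNpos : (0 : ℚ) < #𝒜 := by exact_mod_cast hN
  nlinarith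

theorem IsConstWeightFamily.link {X : Finset α} {w k : ℕ} {𝒜 : Finset (Finset α)}
    (h : IsConstWeightFamily X (w + 1) (k + 1) 𝒜) (s : α) :
    IsConstWeightFamily (X.erase s) w k ({A ∈ 𝒜 | s ∈ A}.image (·.erase s)) where
  subset := by
    simp only [mem_image, mem_filter, forall_exists_index, and_imp]
    rintro _ A hA - rfl
    exact erase_subset_erase s (h.subset A hA)
  card_eq := by
    simp only [mem_image, mem_filter, forall_exists_index, and_imp]
    rintro _ A hA hsA rfl
    rw [card_erase_of_mem hsA, h.card_eq A hA, Nat.add_sub_cancel]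
  card_inter_le := by
    simp only [mem_image, mem_filter, forall_exists_index, and_imp]
    rintro _ A hA hsA rfl _ B hB hsB rfl hAB
    rw [erase_inter, inter_erase, erase_idem, card_erase_of_mem (mem_inter.2 ⟨hsA, hsB⟩)]
    have := h.card_inter_le A hA B hB (by rintro rfl; exact hAB rfl)
    omega

theorem card_image_erase_filter_mem (𝒜 : Finset (Finset α)) (s : α) :
    #({A ∈ 𝒜 | s ∈ A}.image (·.erase s)) = #{A ∈ 𝒜 | s ∈ A} :=
  card_image_of_injOn fun _ hA _ hB => erase_injOn' s (mem_filter.1 hA).2 (mem_filter.1 hB).2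

theorem card_mul_le_of_card_filter_mem_le {X : Finset α} {𝒜 : Finset (Finset α)} {w : ℕ}
    (h𝒜 : ∀ A ∈ 𝒜, A ⊆ X) (hw : ∀ A ∈ 𝒜, #A = w) {M : ℤ}
    (hM : ∀ s ∈ X, (#{A ∈ 𝒜 | s ∈ A} : ℤ) ≤ M) : (#𝒜 * w : ℤ) ≤ #X * M := by
  have double_count : ∑ s ∈ X, #{A ∈ 𝒜 | s ∈ A} = #𝒜 * w := by
    have := sum_card_bipartiteAbove_eq_sum_card_bipartiteBelow (s := X) (t := 𝒜) (r := (· ∈ ·))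
    simp only [bipartiteAbove, bipartiteBelow] at this
    rw [this, ← smul_eq_mul, ← sum_const]
    refine sum_congr rfl fun A hA => ?_
    rw [← hw A hA, filter_mem_eq_inter, inter_eq_right.2 (h𝒜 A hA)]
  calc (#𝒜 * w : ℤ) = ∑ s ∈ X, (#{A ∈ 𝒜 | s ∈ A} : ℤ) := by exact_mod_cast double_count.symm
    _ ≤ ∑ _s ∈ X, M := sum_le_sum hM
    _ = #X * M := by rw [sum_const, nsmul_eq_mul]

theorem card_le_of_johnson_recursion {n w k d : ℕ} {F : ℕ → ℤ}
    (hbase : ∀ (X : Finset α) (𝒜 : Finset (Finset α)),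
      #X = n → IsConstWeightFamily X w k 𝒜 → (#𝒜 : ℤ) ≤ F 0)
    (hstep : ∀ t < d, F (t + 1) = ⌊((n + t + 1 : ℕ) : ℚ) * (F t : ℚ) / ((w + t + 1 : ℕ) : ℚ)⌋)
    {t : ℕ} (ht : t ≤ d) {X : Finset α} {𝒜 : Finset (Finset α)} (hX : #X = n + t)
    (h : IsConstWeightFamily X (w + t) (k + t) 𝒜) : (#𝒜 : ℤ) ≤ F t := by
  induction t generalizing X 𝒜 with
  | zero => exact hbase X 𝒜 hX h
  | succ t ih =>
    have hlink (s : α) (hs : s ∈ X) : (#{A ∈ 𝒜 | s ∈ A} : ℤ) ≤ F t := by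
      rw [← card_image_erase_filter_mem]
      exact ih (by omega) (by rw [card_erase_of_mem hs, hX]; rfl) (h.link s)
    have johnson := card_mul_le_of_card_filter_mem_le h.subset h.card_eq hlink
    rw [hstep t (by omega), Int.le_floor, le_div_iff₀ (by positivity)]
    rw [hX] at johnson
    exact_mod_cast johnson

end

theorem IsCWC.injective_support {ι σ : Type*} [Fintype σ] [DecidableEq σ] {W K : ℕ}
    {x : ι → σ → Bool} (hC : IsCWC W K x) :
    Function.Injective fun j => ({s | x j s = true} : Finset σ) := by
  intro i j hij
  refine hC.1 (funext fun s => Bool.eq_iff_iff.2 ?_)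
  simpa using congr(s ∈ $hij)

theorem IsCWC.isConstWeightFamily {ι σ : Type*} [Fintype ι] [Fintype σ] [DecidableEq σ]
    {W K : ℕ} {x : ι → σ → Bool} (hC : IsCWC W K x) :
    IsConstWeightFamily univ W K (univ.image fun j => ({s | x j s = true} : Finset σ)) where
  subset _ _ := subset_univ _
  card_eq := by
    simp only [mem_image, mem_univ, true_and, forall_exists_index]
    rintro _ j rfl
    exact hC.2.1 j
  card_inter_le := by
    simp only [mem_image, mem_univ, true_and, forall_exists_index]
    rintro _ i rfl _ j rfl hij
    rw [← filter_and]
    exact hC.2.2 i j (by rintro rfl; exact hij rfl)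

theorem cwc_combined_bound_general {S N W K : ℕ} (x : Fin N → Fin S → Bool)
    (hKW : K < W) (hWS : W ≤ S) (hC : IsCWC W K x)
    (ℓ : ℕ) (d' : ℕ) (hd2 : d' ≤ K)
    (A' : ℚ)
    (hA' : A' = ∑ u ∈ Finset.Icc 1 ℓ,
        (((W - d').choose u : ℚ)) ^ 2 *
          (∑ k ∈ Finset.range (u + 1),
            (-1 : ℚ) ^ k * (u.choose k : ℚ) * (((u - k : ℕ)) : ℚ) ^ ℓ)
          / ((S - d').choose u : ℚ))
    (hAK : (((K - d' : ℕ)) : ℚ) ^ ℓ < A')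
    (F : ℕ → ℤ)
    (hF0 : F 0 = ⌊((((W - d' : ℕ)) : ℚ) ^ ℓ - (((K - d' : ℕ)) : ℚ) ^ ℓ)
        / (A' - (((K - d' : ℕ)) : ℚ) ^ ℓ)⌋)
    (hFt : ∀ t, t < d' →
      F (t + 1) = ⌊(((S - d' + t + 1 : ℕ)) : ℚ) * ((F t : ℤ) : ℚ)
          / (((W - d' + t + 1 : ℕ)) : ℚ)⌋) :
    (N : ℤ) ≤ F d' := by
  have moment (X : Finset (Fin S)) (𝒜 : Finset (Finset (Fin S))) (hX : #X = S - d')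
      (h : IsConstWeightFamily X (W - d') (K - d') 𝒜) : (#𝒜 : ℤ) ≤ F 0 := by
    have hA'_eq : A' = overlapMomentBound #X (W - d') ℓ := by
      rw [hA', hX, overlapMomentBound]
      push_cast [surjCount]
      rfl
    rw [hF0, Int.le_floor, Int.cast_natCast]
    subst hA'_eq
    exact h.card_le_overlapMomentBound (by omega) hAK
  have hfamily := hC.isConstWeightFamily
  rw [← Nat.sub_add_cancel (hd2.trans hKW.le), ← Nat.sub_add_cancel hd2] at hfamily
  have := card_le_of_johnson_recursion moment hFt le_rfl (by simp; omega) hfamily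
  rwa [card_image_of_injective _ hC.injective_support, card_univ, Fintype.card_fin] at this

/-- Combined Johnson-recursion / correlation-moment upper bound on the size
of a binary constant-weight code. With `S' = S - d'`, `W' = W - d'`, `K' = K - d'`, and
`A' = ∑_{u=1}^{ℓ} C(W',u)² C_{ℓ,u} / C(S',u)`, if `A' > (K')^ℓ` then `N ≤ F(d')`, where
`F(0) = ⌊((W')^ℓ - (K')^ℓ) / (A' - (K')^ℓ)⌋` and
`F(t+1) = ⌊((S - d' + t + 1) / (W - d' + t + 1)) * F(t)⌋` for `0 ≤ t < d'`. -/
theorem cwc_combined_bound {S N W K : ℕ} (x : Fin N → Fin S → Bool)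
    (hK : 1 ≤ K) (hKW : K < W) (hWS : W ≤ S) (hC : IsCWC W K x)
    (ℓ : ℕ) (hl : 1 ≤ ℓ) (d' : ℕ) (hd1 : 1 ≤ d') (hd2 : d' ≤ K)
    (A' : ℚ)
    (hA' : A' = ∑ u ∈ Finset.Icc 1 ℓ,
        (((W - d').choose u : ℚ)) ^ 2 *
          (∑ k ∈ Finset.range (u + 1),
            (-1 : ℚ) ^ k * (u.choose k : ℚ) * (((u - k : ℕ)) : ℚ) ^ ℓ)
          / ((S - d').choose u : ℚ))
    (hAK : (((K - d' : ℕ)) : ℚ) ^ ℓ < A')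
    (F : ℕ → ℤ)
    (hF0 : F 0 = ⌊((((W - d' : ℕ)) : ℚ) ^ ℓ - (((K - d' : ℕ)) : ℚ) ^ ℓ)
        / (A' - (((K - d' : ℕ)) : ℚ) ^ ℓ)⌋)
    (hFt : ∀ t, t < d' →
      F (t + 1) = ⌊(((S - d' + t + 1 : ℕ)) : ℚ) * ((F t : ℤ) : ℚ)
          / (((W - d' + t + 1 : ℕ)) : ℚ)⌋) :
    (N : ℤ) ≤ F d' :=
  cwc_combined_bound_general x hKW hWS hC ℓ d' hd2 A' hA' hAK F hF0 hFt
end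

section
/- Let p be a prime and let k_o, k_oo be integers with 1 ≤ k_o ≤ p − 2 and 1 ≤ k_oo ≤ p^{k_o} − 2. Then there exists a binary constant-weight code with parameters S = p(p−1)²(p^{k_o} − 1), N = p^{k_o·k_oo}, W = (p−1)²(p^{k_o} − 1), and K = (p−1)²(k_oo − 1) + (p−1)(k_o − 1)(p^{k_o} − 1): namely, all pairwise overlaps are at most K, all N codewords are distinct of length S and weight W. Such a code is obtained by concatenating the (p²−p, p, p−1, 0) modified prime-sequence binary constant-weight code with an outer [p−1, k_o] Reed–Solomon code over GF(p) and then with an outer [p^{k_o}−1, k_oo] Reed–Solomon code over GF(p^{k_o}). -/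
/-!
A `q`-ary code `c : M → A → Q` with codewords agreeing in at most `K` coordinates becomes a
binary constant-weight code of weight `|A|` and overlap `K` by replacing each symbol with its
indicator vector in `Bool^Q`. Concatenating an outer code with agreement `K₁` and an inner code
`Q → B → R` with agreement `K₂` gives agreement at most `K₁ |B| + |A| K₂`, since coordinates
where the outer codewords agree contribute at most `|B|` and the others at most `K₂`. A
Reed–Solomon code with messages of length `n` has agreement at most `n - 1`, because a nonzero
polynomial of degree `< n` has fewer than `n` roots, and the prime-sequence code `i ↦ (s ↦ i s)`
has agreement `0`. Applying the concatenation bound twice gives the stated `K`.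
-/

open Finset Function

open Polynomial

section Concatenation

variable {M A B Q R : Type*}

def concatCode (c : M → A → Q) (d : Q → B → R) (m : M) : A × B → R :=
  fun x => d (c m x.1) x.2

theorem concatCode_injective {c : M → A → Q} {d : Q → B → R} (hc : Injective c)
    (hd : Injective d) : Injective (concatCode c d) := by
  intro m m' h
  apply hc; funext a
  apply hd; funext b
  exact congrFun h (a, b)

variable [Fintype A] [Fintype B]

theorem card_filter_prod_eq_sum (P : A × B → Prop) [DecidablePred P] :
    #{x | P x} = ∑ a, #{b | P (a, b)} := by
  simp only [card_eq_sum_ones, sum_filter, Fintype.sum_prod_type]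

variable [DecidableEq Q] [DecidableEq R]

def agreeCount (u v : A → Q) : ℕ := #{a | u a = v a}

theorem agreeCount_self (u : A → Q) : agreeCount u u = Fintype.card A := by
  simp [agreeCount]

theorem agreeCount_concatCode_le (c : M → A → Q) {d : Q → B → R} {K : ℕ}
    (hd : ∀ q q', q ≠ q' → agreeCount (d q) (d q') ≤ K) (m m' : M) :
    agreeCount (concatCode c d m) (concatCode c d m') ≤
      agreeCount (c m) (c m') * Fintype.card B + Fintype.card A * K := by
  have hterm : ∀ a, agreeCount (d (c m a)) (d (c m' a)) ≤
      (if c m a = c m' a then Fintype.card B else 0) + K := by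
    intro a
    split_ifs with h
    · rw [h, agreeCount_self]; exact le_self_add
    · exact (hd _ _ h).trans le_add_self
  calc agreeCount (concatCode c d m) (concatCode c d m')
      = ∑ a, agreeCount (d (c m a)) (d (c m' a)) := card_filter_prod_eq_sum _
    _ ≤ ∑ a, ((if c m a = c m' a then Fintype.card B else 0) + K) :=
        sum_le_sum fun a _ => hterm a
    _ = agreeCount (c m) (c m') * Fintype.card B + Fintype.card A * K := by
        simp [sum_add_distrib, sum_ite, agreeCount]

end Concatenation

section BinaryImage

variable {M A Q : Type*} [DecidableEq Q]

def graphIndicator (u : A → Q) : A × Q → Bool := fun x => decide (x.2 = u x.1)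

theorem graphIndicator_injective : Injective (graphIndicator (A := A) (Q := Q)) := by
  intro u v h
  funext a
  simpa [graphIndicator] using congrFun h (a, u a)

variable [Fintype A] [Fintype Q]

theorem cwWeight_graphIndicator (u : A → Q) : cwWeight (graphIndicator u) = Fintype.card A := by
  simp [cwWeight, graphIndicator, card_filter_prod_eq_sum, filter_eq']

theorem cwOverlap_graphIndicator (u v : A → Q) :
    cwOverlap (graphIndicator u) (graphIndicator v) = agreeCount u v := by
  rw [cwOverlap, agreeCount, card_filter_prod_eq_sum, card_filter]
  refine sum_congr rfl fun a _ => ?_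
  by_cases h : u a = v a <;> simp [graphIndicator, h, filter_eq']

theorem isCWC_graphIndicator {c : M → A → Q} {K : ℕ} (hc : Injective c)
    (hK : ∀ m m', m ≠ m' → agreeCount (c m) (c m') ≤ K) :
    IsCWC (Fintype.card A) K (fun m => graphIndicator (c m)) :=
  ⟨graphIndicator_injective.comp hc, fun m => cwWeight_graphIndicator (c m),
    fun m m' h => (cwOverlap_graphIndicator _ _).trans_le (hK m m' h)⟩

end BinaryImage

section Reindexing

variable {ι ι' σ σ' : Type*} [Fintype σ] [Fintype σ']

theorem cwWeight_comp_equiv (a : σ → Bool) (f : σ' ≃ σ) : cwWeight (a ∘ f) = cwWeight a :=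
  card_equiv f (by simp)

theorem cwOverlap_comp_equiv (a b : σ → Bool) (f : σ' ≃ σ) :
    cwOverlap (a ∘ f) (b ∘ f) = cwOverlap a b :=
  card_equiv f (by simp)

theorem IsCWC.comp_equiv {W K : ℕ} {x : ι → σ → Bool} (hx : IsCWC W K x) (e : ι' ↪ ι)
    (f : σ' ≃ σ) : IsCWC W K (fun j => x (e j) ∘ f) := by
  obtain ⟨hinj, hW, hK⟩ := hx
  refine ⟨fun j j' h => e.injective (hinj ?_), fun j => ?_, fun j j' h => ?_⟩
  · funext s
    simpa using congrFun h (f.symm s)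
  · rw [cwWeight_comp_equiv, hW]
  · rw [cwOverlap_comp_equiv]; exact hK _ _ (e.injective.ne h)

theorem IsCWC.exists_fin [Fintype ι] {W K N S : ℕ} {x : ι → σ → Bool} (hx : IsCWC W K x)
    (hN : Fintype.card ι = N) (hS : Fintype.card σ = S) :
    ∃ y : Fin N → Fin S → Bool, IsCWC W K y :=
  ⟨_, hx.comp_equiv (Fintype.equivFinOfCardEq hN).symm.toEmbedding
    (Fintype.equivFinOfCardEq hS).symm⟩

end Reindexing

section ReedSolomon

variable (F : Type*) [Field F]

noncomputable def reedSolomon (n : ℕ) (m : Fin n → F) : Fˣ → F :=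
  fun α => ((degreeLTEquiv F n).symm m : F[X]).eval (α : F)

variable {F} [Fintype F] [DecidableEq F]

theorem agreeCount_reedSolomon_lt {n : ℕ} {m m' : Fin n → F} (h : m ≠ m') :
    agreeCount (reedSolomon F n m) (reedSolomon F n m') < n := by
  by_contra! hn
  have hdeg : ∀ v : Fin n → F, ((degreeLTEquiv F n).symm v : F[X]).degree <
      #{α | reedSolomon F n m α = reedSolomon F n m' α} := fun v =>
    (mem_degreeLT.mp (Submodule.coe_mem _)).trans_le (by exact_mod_cast hn)
  have hpoly := eq_of_degrees_lt_of_eval_index_eq _ Units.val_injective.injOn (hdeg m) (hdeg m')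
    fun α hα => (mem_filter.mp hα).2
  exact h ((degreeLTEquiv F n).symm.injective (Subtype.ext hpoly))

theorem reedSolomon_injective {n : ℕ} (hn : n ≤ Fintype.card Fˣ) :
    Injective (reedSolomon F n) := by
  intro m m' h
  by_contra hne
  have hlt := agreeCount_reedSolomon_lt hne
  rw [h, agreeCount_self] at hlt
  omega

end ReedSolomon

section PrimeSequence

variable (R : Type*) [Monoid R]

/-- `graphIndicator (primeSequence (ZMod p) i)` is the modified prime sequence `v_i`. -/
def primeSequence (i : R) (s : Rˣ) : R := i * s

variable {R}

theorem primeSequence_injective : Injective (primeSequence R) := fun i i' h => by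
  simpa [primeSequence] using congrFun h 1

theorem agreeCount_primeSequence_eq_zero [Fintype Rˣ] [DecidableEq R] {i i' : R} (h : i ≠ i') :
    agreeCount (primeSequence R i) (primeSequence R i') = 0 := by
  simp [agreeCount, primeSequence, h]

end PrimeSequence

section Construction1

variable {K F : Type*} [Field K] [Field F] {k : ℕ}

noncomputable def construction1Code (e : F → Fin k → K) (k' : ℕ) :
    (Fin k' → F) → Fˣ × (Kˣ × Kˣ) → K :=
  concatCode (reedSolomon F k') (concatCode (reedSolomon K k ∘ e) (primeSequence K))

variable [Fintype K] [DecidableEq K] [Fintype F] [DecidableEq F]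

theorem construction1Code_injective {e : F → Fin k → K} (he : Injective e) {k' : ℕ}
    (hk : k ≤ Fintype.card Kˣ) (hk' : k' ≤ Fintype.card Fˣ) :
    Injective (construction1Code e k') :=
  concatCode_injective (reedSolomon_injective hk')
    (concatCode_injective ((reedSolomon_injective hk).comp he) primeSequence_injective)

theorem agreeCount_construction1Code_le {e : F → Fin k → K} (he : Injective e) {k' : ℕ}
    {m m' : Fin k' → F} (h : m ≠ m') :
    agreeCount (construction1Code e k' m) (construction1Code e k' m') ≤
      (k' - 1) * Fintype.card Kˣ ^ 2 + Fintype.card Fˣ * ((k - 1) * Fintype.card Kˣ) := by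
  have hinner : ∀ a a' : F, a ≠ a' →
      agreeCount (concatCode (reedSolomon K k ∘ e) (primeSequence K) a)
        (concatCode (reedSolomon K k ∘ e) (primeSequence K) a') ≤
        (k - 1) * Fintype.card Kˣ := by
    intro a a' ha
    have hrs := agreeCount_reedSolomon_lt (he.ne ha)
    refine (agreeCount_concatCode_le _ (fun i i' hi => (agreeCount_primeSequence_eq_zero hi).le)
      a a').trans ?_
    rw [mul_zero, add_zero]
    exact Nat.mul_le_mul_right _ (by simp only [comp_apply]; omega)
  have hrs := agreeCount_reedSolomon_lt h
  refine (agreeCount_concatCode_le _ hinner m m').trans ?_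
  rw [Fintype.card_prod, ← sq]
  exact Nat.add_le_add_right (Nat.mul_le_mul_right _ (by omega)) _

end Construction1

theorem construction1_rs_cwc_general {p ko koo : ℕ} (hp : p.Prime)
    (hko1 : 1 ≤ ko) (hko2 : ko ≤ p - 2)
    (hkoo2 : koo ≤ p ^ ko - 2) :
    ∃ x : Fin (p ^ (ko * koo)) → Fin (p * (p - 1) ^ 2 * (p ^ ko - 1)) → Bool,
      IsCWC ((p - 1) ^ 2 * (p ^ ko - 1))
        ((p - 1) ^ 2 * (koo - 1) + (p - 1) * (ko - 1) * (p ^ ko - 1)) x := by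
  classical
  have : Fact p.Prime := ⟨hp⟩
  let : Fintype (GaloisField p ko) := Fintype.ofFinite _
  have hcardF : Fintype.card (GaloisField p ko) = p ^ ko := by
    rw [← Nat.card_eq_fintype_card, GaloisField.card p ko (by omega)]
  have hcardFu : Fintype.card (GaloisField p ko)ˣ = p ^ ko - 1 := by
    rw [Fintype.card_units, hcardF]
  let b := Module.finBasisOfFinrankEq (ZMod p) (GaloisField p ko) (GaloisField.finrank p (by omega))
  have hcode := isCWC_graphIndicator
    (construction1Code_injective b.equivFun.injective (by rw [ZMod.card_units]; omega)
      (by omega : koo ≤ Fintype.card (GaloisField p ko)ˣ))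
    (fun m m' h => agreeCount_construction1Code_le b.equivFun.injective h)
  obtain ⟨x, hx⟩ := hcode.exists_fin (N := p ^ (ko * koo)) (S := p * (p - 1) ^ 2 * (p ^ ko - 1))
    (by rw [Fintype.card_fun, hcardF, Fintype.card_fin, pow_mul])
    (by simp only [Fintype.card_prod, hcardFu, ZMod.card_units, ZMod.card]; ring)
  refine ⟨x, ?_⟩
  convert hx using 1
  · simp only [Fintype.card_prod, hcardFu, ZMod.card_units]; ring
  · rw [hcardFu, ZMod.card_units]; ring

/-- Construction 1 (with two outer Reed–Solomon codes). For a prime `p` and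
`1 ≤ k_o ≤ p - 2`, `1 ≤ k_oo ≤ p^{k_o} - 2`, there exists a binary constant-weight code
with parameters `S = p(p-1)²(p^{k_o} - 1)`, `N = p^{k_o k_oo}`,
`W = (p-1)²(p^{k_o} - 1)`, and `K = (p-1)²(k_oo - 1) + (p-1)(k_o - 1)(p^{k_o} - 1)`. -/
theorem construction1_rs_cwc {p ko koo : ℕ} (hp : p.Prime)
    (hko1 : 1 ≤ ko) (hko2 : ko ≤ p - 2)
    (hkoo1 : 1 ≤ koo) (hkoo2 : koo ≤ p ^ ko - 2) :
    ∃ x : Fin (p ^ (ko * koo)) → Fin (p * (p - 1) ^ 2 * (p ^ ko - 1)) → Bool,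
      IsCWC ((p - 1) ^ 2 * (p ^ ko - 1))
        ((p - 1) ^ 2 * (koo - 1) + (p - 1) * (ko - 1) * (p ^ ko - 1)) x :=
  construction1_rs_cwc_general hp hko1 hko2 hkoo2
end

section
/- Let p be a prime and let k_o, k_oo be integers with 1 ≤ k_o ≤ p and 1 ≤ k_oo ≤ p^{k_o}. Then there exists a binary constant-weight code with parameters S = p(p² − 1)(p^{k_o} + 1), N = p^{k_o·k_oo}, W = (p² − 1)(p^{k_o} + 1), and K = (p² − 1)(k_oo − 1) + (p−1)(k_o − 1)(p^{k_o} + 1). Such a code is obtained by concatenating the (p²−p, p, p−1, 0) modified prime-sequence binary constant-weight code with an outer [p+1, k_o] doubly-extended Reed–Solomon code over GF(p) and then with an outer [p^{k_o}+1, k_oo] doubly-extended Reed–Solomon code over GF(p^{k_o}). -/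
open Finset Function Polynomial

set_option linter.unusedSectionVars false
section RS
variable {F : Type*} [Field F] [Fintype F] [DecidableEq F]

/-- Doubly-extended Reed–Solomon encoding. -/
noncomputable def rsEnc (k : ℕ) (m : Fin k → F) : Option F → F
  | some b => ∑ i, m i * b ^ (i : ℕ)
  | none => if h : 0 < k then m ⟨k - 1, Nat.sub_lt h one_pos⟩ else 0

noncomputable def rsPoly (k : ℕ) (m : Fin k → F) : Polynomial F :=
  ∑ i : Fin k, Polynomial.C (m i) * Polynomial.X ^ (i : ℕ)

lemma rsPoly_coeff (k : ℕ) (m : Fin k → F) (j : ℕ) :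
    (rsPoly k m).coeff j = if h : j < k then m ⟨j, h⟩ else 0 := by
  rw [rsPoly, finset_sum_coeff]
  simp only [coeff_C_mul, coeff_X_pow, mul_ite, mul_one, mul_zero]
  by_cases h : j < k
  · rw [dif_pos h, Finset.sum_eq_single (⟨j, h⟩ : Fin k)]
    · simp
    · intro i _ hi
      rw [if_neg]
      intro hji
      exact hi (by ext; simp [← hji])
    · simp
  · rw [dif_neg h, Finset.sum_eq_zero]
    intro i _
    rw [if_neg]
    intro hji
    exact h (hji ▸ i.isLt)

lemma rs_agreement {k : ℕ} (hk : 0 < k) {m m' : Fin k → F} (hne : m ≠ m') :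
    ((univ : Finset (Option F)).filter
      (fun v => rsEnc k m v = rsEnc k m' v)).card ≤ k - 1 := by
  classical
  set d : Fin k → F := fun i => m i - m' i with hd
  set q : Polynomial F := rsPoly k d with hq
  have hq0 : q ≠ 0 := by
    obtain ⟨i, hi⟩ := Function.ne_iff.mp hne
    intro h
    apply hi
    have hc := rsPoly_coeff k d (i : ℕ)
    rw [← hq, h, coeff_zero, dif_pos i.isLt] at hc
    have : d i = 0 := by
      have := hc.symm
      simpa using this
    exact sub_eq_zero.mp this
  have hkey : ∀ b : F, (rsEnc k m (some b) = rsEnc k m' (some b)) ↔ q.eval b = 0 := by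
    intro b
    have hev : q.eval b = rsEnc k m (some b) - rsEnc k m' (some b) := by
      simp [hq, rsPoly, rsEnc, hd, sub_mul, Finset.sum_sub_distrib, eval_finset_sum]
    rw [hev, sub_eq_zero]
  set Af := (univ : Finset F).filter (fun b => q.eval b = 0) with hAfdef
  have hAf : Af.card ≤ q.natDegree := by
    calc Af.card ≤ q.roots.toFinset.card := by
          apply Finset.card_le_card
          intro b hb
          rw [Multiset.mem_toFinset, mem_roots hq0]
          exact (mem_filter.mp hb).2
      _ ≤ Multiset.card q.roots := Multiset.toFinset_card_le _
      _ ≤ q.natDegree := card_roots' q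
  have hcoeff_top : q.coeff (k - 1) = rsEnc k m none - rsEnc k m' none := by
    rw [hq, rsPoly_coeff, dif_pos (by omega : k - 1 < k)]
    simp [rsEnc, dif_pos hk, hd]
  set A := (univ : Finset (Option F)).filter
      (fun v => rsEnc k m v = rsEnc k m' v) with hAdef
  by_cases hcase : q.coeff (k - 1) = 0
  · have hk2 : 2 ≤ k := by
      by_contra hlt
      have hk1 : k = 1 := by omega
      apply hq0
      apply Polynomial.ext
      intro j
      rw [hq, rsPoly_coeff, coeff_zero]
      by_cases hj : j < k
      · have : j = k - 1 := by omega
        subst this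
        rw [dif_pos hj]
        have := hcase
        rw [hq, rsPoly_coeff, dif_pos (by omega : k - 1 < k)] at this
        exact this
      · rw [dif_neg hj]
    have hdeg : q.natDegree ≤ k - 2 := by
      rw [natDegree_le_iff_coeff_eq_zero]
      intro N hN
      by_cases hNk : N < k
      · have : N = k - 1 := by omega
        rw [this]; exact hcase
      · rw [hq, rsPoly_coeff, dif_neg hNk]
    have hA : A ⊆ insert none (Af.image some) := by
      intro v hv
      rw [hAdef, mem_filter] at hv
      match v with
      | none => exact Finset.mem_insert_self _ _
      | some b =>
        apply Finset.mem_insert_of_mem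
        exact Finset.mem_image_of_mem some
          (mem_filter.mpr ⟨mem_univ _, (hkey b).mp hv.2⟩)
    calc A.card ≤ (insert none (Af.image some)).card := Finset.card_le_card hA
      _ ≤ (Af.image some).card + 1 := Finset.card_insert_le _ _
      _ ≤ Af.card + 1 := by
          have := Finset.card_image_le (f := some) (s := Af); omega
      _ ≤ (k - 2) + 1 := by have := hAf.trans hdeg; omega
      _ ≤ k - 1 := by omega
  · have hdeg : q.natDegree ≤ k - 1 := by
      rw [natDegree_le_iff_coeff_eq_zero]
      intro N hN
      rw [hq, rsPoly_coeff, dif_neg (by omega)]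
    have hA : A ⊆ Af.image some := by
      intro v hv
      rw [hAdef, mem_filter] at hv
      match v with
      | none =>
        exact absurd (by rw [hcoeff_top, hv.2, sub_self]) hcase
      | some b =>
        exact Finset.mem_image_of_mem some
          (mem_filter.mpr ⟨mem_univ _, (hkey b).mp hv.2⟩)
    calc A.card ≤ (Af.image some).card := Finset.card_le_card hA
      _ ≤ Af.card := Finset.card_image_le
      _ ≤ k - 1 := hAf.trans hdeg

lemma rs_injective {k : ℕ} (hk : 0 < k) (hk2 : k ≤ Fintype.card F) :
    Function.Injective (fun m : Fin k → F => rsEnc k m) := by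
  intro m m' h
  by_contra hne
  have hle := rs_agreement hk hne
  have heq : ((univ : Finset (Option F)).filter
      (fun v => rsEnc k m v = rsEnc k m' v)) = univ := by
    apply Finset.filter_true_of_mem
    intro v _
    exact congrFun h v
  rw [heq, card_univ, Fintype.card_option] at hle
  omega

end RS



/-- Modified prime-sequence inner codeword for symbol `c`. -/
def innerCW (p : ℕ) (c : ZMod p) : Fin (p - 1) × ZMod p → Bool :=
  fun st => decide (st.2 = c * ((st.1.val + 1 : ℕ) : ZMod p))

variable {p : ℕ} [Fact p.Prime]

lemma innerCW_cast_ne (s : Fin (p - 1)) :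
    ((s.val + 1 : ℕ) : ZMod p) ≠ 0 := by
  have hp : p.Prime := Fact.out
  rw [Ne, ZMod.natCast_eq_zero_iff]
  intro hdvd
  have h1 := Nat.le_of_dvd (by omega) hdvd
  have h2 := s.isLt
  omega

lemma innerCW_weight (c : ZMod p) :
    (univ.filter (fun st => innerCW p c st = true)).card = p - 1 := by
  have himg : (univ.filter (fun st => innerCW p c st = true)) =
      univ.image (fun s : Fin (p - 1) => (s, c * ((s.val + 1 : ℕ) : ZMod p))) := by
    ext ⟨s, t⟩
    simp only [mem_filter, mem_univ, true_and, innerCW, decide_eq_true_eq,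
      Finset.mem_image]
    constructor
    · intro h
      exact ⟨s, by rw [← h]⟩
    · rintro ⟨a, heq⟩
      rw [Prod.mk.injEq] at heq
      rw [← heq.2, heq.1]
  rw [himg, Finset.card_image_of_injective _ (fun a b hab => (Prod.ext_iff.mp hab).1),
    card_univ, Fintype.card_fin]

lemma innerCW_overlap (c c' : ZMod p) :
    (univ.filter (fun st => innerCW p c st = true ∧ innerCW p c' st = true)).card
      = if c = c' then p - 1 else 0 := by
  split_ifs with h
  · subst h
    simp only [and_self]
    exact innerCW_weight c
  · rw [Finset.card_eq_zero, Finset.filter_eq_empty_iff]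
    intro st _
    simp only [innerCW, decide_eq_true_eq]
    rintro ⟨h1, h2⟩
    exact h (mul_right_cancel₀ (innerCW_cast_ne st.1) (h1.symm.trans h2))

lemma innerCW_injective (hp2 : 2 ≤ p) : Function.Injective (innerCW p) := by
  intro c c' h
  have h0 := congrFun h (⟨0, by omega⟩, c)
  simp only [innerCW, decide_eq_decide] at h0
  norm_num at h0
  exact h0

lemma card_filter_prod3 {α β γ : Type*} [Fintype α] [Fintype β] [Fintype γ]
    (P : α × β × γ → Prop) [DecidablePred P] :
    (univ.filter P).card
      = ∑ a : α, ∑ b : β, (univ.filter (fun c => P (a, b, c))).card := by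
  classical
  simp only [Finset.card_filter]
  rw [← Finset.univ_product_univ, Finset.sum_product]
  refine Finset.sum_congr rfl fun a _ => ?_
  rw [← Finset.univ_product_univ, Finset.sum_product]

lemma cwWeight_comp_equiv_s9 {σ τ : Type*} [Fintype σ] [Fintype τ] (e : σ ≃ τ)
    (a : τ → Bool) : cwWeight (fun s => a (e s)) = cwWeight a :=
  Finset.card_equiv e (by simp)

lemma cwOverlap_comp_equiv_s9 {σ τ : Type*} [Fintype σ] [Fintype τ] (e : σ ≃ τ)
    (a b : τ → Bool) :
    cwOverlap (fun s => a (e s)) (fun s => b (e s)) = cwOverlap a b :=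
  Finset.card_equiv e (by simp)

section Big

open Polynomial

variable {p ko koo : ℕ} [Fact p.Prime] [Fintype (GaloisField p ko)]
  [DecidableEq (GaloisField p ko)]

/-- The concatenated codeword for message `m`: the message is encoded with the
`[p^ko + 1, koo]` doubly-extended RS code over `GF(p^ko)`, each resulting symbol
is encoded with the `[p + 1, ko]` doubly-extended RS code over `GF(p)` (after
identifying `GF(p^ko)` with `ko`-tuples over `GF(p)` via `φ`), and each `GF(p)`
symbol is finally encoded with the modified prime-sequence code. -/
noncomputable def bigCode (p ko koo : ℕ) [Fact p.Prime]
    (φ : GaloisField p ko ≃ (Fin ko → ZMod p))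
    (m : Fin koo → GaloisField p ko) :
    Option (GaloisField p ko) × Option (ZMod p) × (Fin (p - 1) × ZMod p) → Bool :=
  fun z => innerCW p (rsEnc ko (φ (rsEnc koo m z.1)) z.2.1) z.2.2

lemma prime_sq_sub_one (hp2 : 2 ≤ p) : (p + 1) * (p - 1) = p ^ 2 - 1 := by
  obtain ⟨q, rfl⟩ : ∃ q, p = q + 2 := ⟨p - 2, by omega⟩
  apply Nat.eq_sub_of_add_eq
  have h1 : q + 2 - 1 = q + 1 := by omega
  rw [h1]
  ring

lemma bigCode_weight (hcard2 : Fintype.card (GaloisField p ko) = p ^ ko)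
    (φ : GaloisField p ko ≃ (Fin ko → ZMod p)) (m : Fin koo → GaloisField p ko) :
    cwWeight (bigCode p ko koo φ m) = (p ^ 2 - 1) * (p ^ ko + 1) := by
  have hp : p.Prime := Fact.out
  have hp2 : 2 ≤ p := hp.two_le
  rw [cwWeight, card_filter_prod3]
  calc (∑ u : Option (GaloisField p ko), ∑ v : Option (ZMod p),
        (univ.filter (fun st : Fin (p - 1) × ZMod p =>
          bigCode p ko koo φ m (u, v, st) = true)).card)
      = ∑ _u : Option (GaloisField p ko), ∑ _v : Option (ZMod p), (p - 1) :=
        Finset.sum_congr rfl fun u _ => Finset.sum_congr rfl fun v _ =>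
          innerCW_weight (rsEnc ko (φ (rsEnc koo m u)) v)
    _ = (p ^ ko + 1) * ((p + 1) * (p - 1)) := by
        simp [Finset.sum_const, card_univ, Fintype.card_option, hcard2, ZMod.card,
          mul_assoc]
    _ = (p ^ 2 - 1) * (p ^ ko + 1) := by rw [prime_sq_sub_one hp2, mul_comm]

lemma bigCode_overlap (hko1 : 1 ≤ ko) (hkoo1 : 1 ≤ koo)
    (hcard2 : Fintype.card (GaloisField p ko) = p ^ ko)
    (φ : GaloisField p ko ≃ (Fin ko → ZMod p))
    {m m' : Fin koo → GaloisField p ko} (hne : m ≠ m') :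
    cwOverlap (bigCode p ko koo φ m) (bigCode p ko koo φ m')
      ≤ (p ^ 2 - 1) * (koo - 1) + (p - 1) * (ko - 1) * (p ^ ko + 1) := by
  classical
  have hp : p.Prime := Fact.out
  have hp2 : 2 ≤ p := hp.two_le
  rw [cwOverlap, card_filter_prod3]
  set c : Option (GaloisField p ko) → Option (ZMod p) → ZMod p :=
    fun u v => rsEnc ko (φ (rsEnc koo m u)) v with hc
  set c' : Option (GaloisField p ko) → Option (ZMod p) → ZMod p :=
    fun u v => rsEnc ko (φ (rsEnc koo m' u)) v with hc'
  have hsum : (∑ u : Option (GaloisField p ko), ∑ v : Option (ZMod p),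
        (univ.filter (fun st : Fin (p - 1) × ZMod p =>
          bigCode p ko koo φ m (u, v, st) = true ∧
          bigCode p ko koo φ m' (u, v, st) = true)).card)
      = ∑ u : Option (GaloisField p ko), ∑ v : Option (ZMod p),
          (if c u v = c' u v then p - 1 else 0) :=
    Finset.sum_congr rfl fun u _ => Finset.sum_congr rfl fun v _ =>
      innerCW_overlap (c u v) (c' u v)
  rw [hsum]
  -- split the outer sum according to whether the outer-outer RS symbols agree
  set A : Finset (Option (GaloisField p ko)) :=
    univ.filter (fun u => rsEnc koo m u = rsEnc koo m' u) with hA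
  have hAcard : A.card ≤ koo - 1 := rs_agreement (by omega) hne
  have hbound1 : ∀ u : Option (GaloisField p ko),
      (∑ v : Option (ZMod p), if c u v = c' u v then p - 1 else 0)
        ≤ (p + 1) * (p - 1) := by
    intro u
    calc (∑ v : Option (ZMod p), if c u v = c' u v then p - 1 else 0)
        ≤ ∑ _v : Option (ZMod p), (p - 1) :=
          Finset.sum_le_sum fun v _ => by split_ifs <;> omega
      _ = (p + 1) * (p - 1) := by
          simp [Finset.sum_const, card_univ, Fintype.card_option, ZMod.card]
  have hbound2 : ∀ u ∉ A,
      (∑ v : Option (ZMod p), if c u v = c' u v then p - 1 else 0)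
        ≤ (ko - 1) * (p - 1) := by
    intro u hu
    have hneq : φ (rsEnc koo m u) ≠ φ (rsEnc koo m' u) := by
      intro heq
      exact hu (by
        rw [hA, mem_filter]
        exact ⟨mem_univ _, φ.injective heq⟩)
    have hagree := rs_agreement (F := ZMod p) (k := ko) (by omega) hneq
    calc (∑ v : Option (ZMod p), if c u v = c' u v then p - 1 else 0)
        = ∑ v ∈ univ.filter (fun v : Option (ZMod p) => c u v = c' u v), (p - 1) :=
          (Finset.sum_filter _ _).symm
      _ = (univ.filter (fun v : Option (ZMod p) => c u v = c' u v)).card * (p - 1) := by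
          rw [Finset.sum_const, smul_eq_mul]
      _ ≤ (ko - 1) * (p - 1) := Nat.mul_le_mul_right _ hagree
  calc (∑ u : Option (GaloisField p ko), ∑ v : Option (ZMod p),
        (if c u v = c' u v then p - 1 else 0))
      = (∑ u ∈ A, ∑ v : Option (ZMod p), (if c u v = c' u v then p - 1 else 0))
        + ∑ u ∈ univ.filter (fun u => ¬ (rsEnc koo m u = rsEnc koo m' u)),
            ∑ v : Option (ZMod p), (if c u v = c' u v then p - 1 else 0) :=
        (Finset.sum_filter_add_sum_filter_not univ _ _).symm
    _ ≤ A.card * ((p + 1) * (p - 1))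
        + (univ.filter (fun u : Option (GaloisField p ko) =>
            ¬ (rsEnc koo m u = rsEnc koo m' u))).card * ((ko - 1) * (p - 1)) := by
        gcongr ?x + ?y
        · calc _ ≤ A.card • ((p + 1) * (p - 1)) :=
                Finset.sum_le_card_nsmul _ _ _ fun u _ => hbound1 u
            _ = _ := smul_eq_mul ..
        · calc _ ≤ (univ.filter (fun u : Option (GaloisField p ko) =>
                  ¬ (rsEnc koo m u = rsEnc koo m' u))).card • ((ko - 1) * (p - 1)) :=
                Finset.sum_le_card_nsmul _ _ _ fun u hu =>
                  hbound2 u (by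
                    rw [hA, mem_filter]
                    intro hmem
                    exact (mem_filter.mp hu).2 hmem.2)
            _ = _ := smul_eq_mul ..
    _ ≤ (koo - 1) * ((p + 1) * (p - 1)) + (p ^ ko + 1) * ((ko - 1) * (p - 1)) := by
        have h1 : A.card * ((p + 1) * (p - 1)) ≤ (koo - 1) * ((p + 1) * (p - 1)) :=
          Nat.mul_le_mul_right _ hAcard
        have hfc : (univ.filter (fun u : Option (GaloisField p ko) =>
            ¬ (rsEnc koo m u = rsEnc koo m' u))).card ≤ p ^ ko + 1 :=
          le_trans (Finset.card_le_card (Finset.filter_subset _ _))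
            (le_of_eq (by rw [card_univ, Fintype.card_option, hcard2]))
        have h2 : (univ.filter (fun u : Option (GaloisField p ko) =>
            ¬ (rsEnc koo m u = rsEnc koo m' u))).card * ((ko - 1) * (p - 1))
              ≤ (p ^ ko + 1) * ((ko - 1) * (p - 1)) :=
          Nat.mul_le_mul_right _ hfc
        omega
    _ = (p ^ 2 - 1) * (koo - 1) + (p - 1) * (ko - 1) * (p ^ ko + 1) := by
        rw [prime_sq_sub_one hp2]
        ring

lemma bigCode_injective (hko1 : 1 ≤ ko) (hko2 : ko ≤ p)
    (hkoo1 : 1 ≤ koo) (hkoo2 : koo ≤ p ^ ko)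
    (hcard2 : Fintype.card (GaloisField p ko) = p ^ ko)
    (φ : GaloisField p ko ≃ (Fin ko → ZMod p)) :
    Function.Injective (bigCode p ko koo φ) := by
  classical
  have hp : p.Prime := Fact.out
  have hp2 : 2 ≤ p := hp.two_le
  intro m m' h
  have hsym : ∀ (u : Option (GaloisField p ko)) (v : Option (ZMod p)),
      rsEnc ko (φ (rsEnc koo m u)) v = rsEnc ko (φ (rsEnc koo m' u)) v := by
    intro u v
    apply innerCW_injective hp2
    funext st
    exact congrFun h (u, v, st)
  have houter : ∀ u : Option (GaloisField p ko), rsEnc koo m u = rsEnc koo m' u := by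
    intro u
    apply φ.injective
    apply rs_injective (F := ZMod p) (by omega) (by rw [ZMod.card]; exact hko2)
    funext v
    exact hsym u v
  apply rs_injective (F := GaloisField p ko) (by omega)
    (by rw [hcard2]; exact hkoo2)
  funext u
  exact houter u

end Big

/-- Construction 1 with two outer doubly-extended Reed–Solomon codes. For a
prime `p` and `1 ≤ k_o ≤ p`, `1 ≤ k_oo ≤ p^{k_o}`, there exists a binary constant-weight
code with parameters `S = p(p² - 1)(p^{k_o} + 1)`, `N = p^{k_o k_oo}`,
`W = (p² - 1)(p^{k_o} + 1)`, and `K = (p² - 1)(k_oo - 1) + (p-1)(k_o - 1)(p^{k_o} + 1)`. -/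
theorem construction1_doubly_extended_rs_cwc {p ko koo : ℕ} (hp : p.Prime)
    (hko1 : 1 ≤ ko) (hko2 : ko ≤ p)
    (hkoo1 : 1 ≤ koo) (hkoo2 : koo ≤ p ^ ko) :
    ∃ x : Fin (p ^ (ko * koo)) → Fin (p * (p ^ 2 - 1) * (p ^ ko + 1)) → Bool,
      IsCWC ((p ^ 2 - 1) * (p ^ ko + 1))
        ((p ^ 2 - 1) * (koo - 1) + (p - 1) * (ko - 1) * (p ^ ko + 1)) x := by
  classical
  haveI : Fact p.Prime := ⟨hp⟩
  haveI : Fintype (GaloisField p ko) := Fintype.ofFinite _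
  have hp2 : 2 ≤ p := hp.two_le
  have hcard2 : Fintype.card (GaloisField p ko) = p ^ ko := by
    rw [← Nat.card_eq_fintype_card]
    exact GaloisField.card p ko (by omega)
  -- identification of `GF(p^ko)` with `ko`-tuples over `GF(p)`
  have hcardφ : Fintype.card (GaloisField p ko) = Fintype.card (Fin ko → ZMod p) := by
    rw [hcard2, Fintype.card_fun, ZMod.card, Fintype.card_fin]
  let φ : GaloisField p ko ≃ (Fin ko → ZMod p) := Fintype.equivOfCardEq hcardφ
  -- identification of messages with elements of `Fin (p ^ (ko * koo))`
  have hcardψ : Fintype.card (Fin (p ^ (ko * koo)))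
      = Fintype.card (Fin koo → GaloisField p ko) := by
    rw [Fintype.card_fin, Fintype.card_fun, hcard2, Fintype.card_fin, ← pow_mul]
  let ψ : Fin (p ^ (ko * koo)) ≃ (Fin koo → GaloisField p ko) :=
    Fintype.equivOfCardEq hcardψ
  -- identification of coordinates
  have hcardτ : Fintype.card (Fin (p * (p ^ 2 - 1) * (p ^ ko + 1)))
      = Fintype.card (Option (GaloisField p ko) × Option (ZMod p)
          × (Fin (p - 1) × ZMod p)) := by
    rw [Fintype.card_fin, Fintype.card_prod, Fintype.card_prod, Fintype.card_prod,
      Fintype.card_option, Fintype.card_option, Fintype.card_fin, ZMod.card, hcard2,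
      ← prime_sq_sub_one hp2]
    ring
  let e : Fin (p * (p ^ 2 - 1) * (p ^ ko + 1))
      ≃ Option (GaloisField p ko) × Option (ZMod p) × (Fin (p - 1) × ZMod p) :=
    Fintype.equivOfCardEq hcardτ
  refine ⟨fun j i => bigCode p ko koo φ (ψ j) (e i), ?_, ?_, ?_⟩
  · intro j j' h
    apply ψ.injective
    apply bigCode_injective hko1 hko2 hkoo1 hkoo2 hcard2 φ
    funext z
    have hz := congrFun h (e.symm z)
    simpa using hz
  · intro j
    exact (cwWeight_comp_equiv_s9 e (bigCode p ko koo φ (ψ j))).trans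
      (bigCode_weight hcard2 φ (ψ j))
  · intro j j' hjj
    have hne : ψ j ≠ ψ j' := fun h => hjj (ψ.injective h)
    exact le_of_eq_of_le
      (cwOverlap_comp_equiv_s9 e (bigCode p ko koo φ (ψ j)) (bigCode p ko koo φ (ψ j')))
      (bigCode_overlap hko1 hkoo1 hcard2 φ hne)
end

section
/- Let p be a prime, m a positive integer, q = p^m with q ≥ 4, let F be a finite field with q² elements, and let α be a generator of the multiplicative group Fˣ. For i ∈ {1, …, q−2}, define B_i = { x ∈ F : (x − 1)^{q+1} = α^{i(q+1)} }. Then: (a) each B_i has exactly q+1 elements; (b) B_i and B_{i'} are disjoint for i ≠ i'; (c) no B_i contains 0 or 1. Consequently, identifying each B_i with a subset of Fˣ ≅ {0, 1, …, q²−2} via the discrete logarithm with base α, the indicator vectors of B_1, …, B_{q−2} form a binary constant-weight code with parameters (q² − 1, q − 2, q + 1, 0). -/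
open Finset Function

section MyAux

variable {F : Type} [Field F] [Fintype F] [DecidableEq F] {q : ℕ} {α : Fˣ}

lemma myaux_fact (hq4 : 4 ≤ q) : q ^ 2 - 1 = (q - 1) * (q + 1) := by
  obtain ⟨a, rfl⟩ : ∃ a, q = a + 4 := ⟨q - 4, by omega⟩
  have e1 : a + 4 - 1 = a + 3 := by omega
  have e2 : (a + 4) ^ 2 = a * a + 8 * a + 16 := by ring
  rw [e1]
  have e3 : (a + 3) * (a + 4 + 1) = a * a + 8 * a + 15 := by ring
  omega

lemma myaux_lt (hq4 : 4 ≤ q) {i : ℕ} (h2 : i ≤ q - 2) :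
    i * (q + 1) < q ^ 2 - 1 := by
  obtain ⟨a, rfl⟩ : ∃ a, q = a + 4 := ⟨q - 4, by omega⟩
  have h3 : i ≤ a + 2 := by omega
  have h4 : i * (a + 4 + 1) ≤ (a + 2) * (a + 5) := Nat.mul_le_mul_right _ h3
  have h5 : (a + 2) * (a + 5) = a * a + 7 * a + 10 := by ring
  have h6 : (a + 4) ^ 2 = a * a + 8 * a + 16 := by ring
  omega

lemma myaux_lt2 (hq4 : 4 ≤ q) {i j : ℕ} (h2 : i ≤ q - 2) (hj : j < q + 1) :
    i + (q - 1) * j < q ^ 2 - 1 := by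
  obtain ⟨a, rfl⟩ : ∃ a, q = a + 4 := ⟨q - 4, by omega⟩
  have h3 : j ≤ a + 4 := by omega
  have e1 : a + 4 - 1 = a + 3 := by omega
  have h4 : (a + 3) * j ≤ (a + 3) * (a + 4) := Nat.mul_le_mul_left _ h3
  have h5 : (a + 3) * (a + 4) = a * a + 7 * a + 12 := by ring
  have h6 : (a + 4) ^ 2 = a * a + 8 * a + 16 := by ring
  rw [e1]
  omega

lemma myaux_inj (horder : orderOf α = q ^ 2 - 1) {a b : ℕ} (ha : a < q ^ 2 - 1)
    (hb : b < q ^ 2 - 1) (h : (α : F) ^ a = (α : F) ^ b) : a = b := by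
  have h' : α ^ a = α ^ b := Units.ext (by push_cast; exact h)
  exact pow_injOn_Iio_orderOf (Set.mem_Iio.mpr (horder ▸ ha)) (Set.mem_Iio.mpr (horder ▸ hb)) h'

lemma myaux_key (hq4 : 4 ≤ q) (horder : orderOf α = q ^ 2 - 1) {i i' : ℕ}
    (h2 : i ≤ q - 2) (h2' : i' ≤ q - 2)
    (h : (α : F) ^ (i * (q + 1)) = (α : F) ^ (i' * (q + 1))) : i = i' :=
  Nat.eq_of_mul_eq_mul_right (by omega)
    (myaux_inj horder (myaux_lt hq4 h2) (myaux_lt hq4 h2') h)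

lemma myaux_log (horder : orderOf α = q ^ 2 - 1) (hα : ∀ x : Fˣ, x ∈ Subgroup.zpowers α)
    {x : F} (hx : x ≠ 0) : ∃ s : ℕ, s < q ^ 2 - 1 ∧ (α : F) ^ s = x := by
  obtain ⟨k, hk⟩ := Subgroup.mem_zpowers_iff.mp (hα (Units.mk0 x hx))
  have hnpos : 0 < q ^ 2 - 1 := horder ▸ orderOf_pos α
  have hzpos : (0 : ℤ) < ((q ^ 2 - 1 : ℕ) : ℤ) := by exact_mod_cast hnpos
  have hnn := Int.emod_nonneg k (by omega : ((q ^ 2 - 1 : ℕ) : ℤ) ≠ 0)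
  have hlt := Int.emod_lt_of_pos k hzpos
  refine ⟨(k % ((q ^ 2 - 1 : ℕ) : ℤ)).toNat, by omega, ?_⟩
  have h1 : α ^ (k % ((q ^ 2 - 1 : ℕ) : ℤ)) = α ^ k := by
    rw [← horder]; exact zpow_mod_orderOf α k
  have h2 : α ^ (((k % ((q ^ 2 - 1 : ℕ) : ℤ)).toNat : ℕ)) = Units.mk0 x hx := by
    rw [← zpow_natCast, Int.toNat_of_nonneg hnn, h1, hk]
  have := congrArg Units.val h2
  simpa using this

lemma myaux_zero (hq4 : 4 ≤ q) (horder : orderOf α = q ^ 2 - 1) {i : ℕ}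
    (h1 : 1 ≤ i) (h2 : i ≤ q - 2) :
    ((0 : F) - 1) ^ (q + 1) ≠ (α : F) ^ (i * (q + 1)) := by
  intro h
  have hsq : (α : F) ^ (i * (q + 1)) * (α : F) ^ (i * (q + 1)) = 1 := by
    rw [← h, ← mul_pow]; norm_num
  have hu : α ^ (i * (q + 1) + i * (q + 1)) = 1 := Units.ext (by push_cast [pow_add]; exact hsq)
  have hdvd : q ^ 2 - 1 ∣ i * (q + 1) + i * (q + 1) :=
    horder ▸ orderOf_dvd_iff_pow_eq_one.mpr hu
  rw [myaux_fact hq4, show i * (q + 1) + i * (q + 1) = (i * 2) * (q + 1) by ring] at hdvd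
  have hdvd2 : q - 1 ∣ i * 2 := (Nat.mul_dvd_mul_iff_right (by omega : 0 < q + 1)).mp hdvd
  obtain ⟨k, hk⟩ := hdvd2
  have hk0 : k ≠ 0 := by rintro rfl; rw [mul_zero] at hk; omega
  have hk2 : k < 2 := by
    by_contra hc
    push_neg at hc
    have h7 : (q - 1) * 2 ≤ (q - 1) * k := Nat.mul_le_mul_left _ hc
    rw [← hk] at h7
    omega
  have hk1 : k = 1 := by omega
  subst hk1
  rw [mul_one] at hk
  have hqe : q + 1 = 2 * (i + 1) := by omega
  have hc1 : ((0 : F) - 1) ^ (q + 1) = 1 := by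
    rw [hqe, pow_mul]
    norm_num
  rw [hc1] at h
  have hu2 : α ^ (i * (q + 1)) = 1 := Units.ext (by push_cast; exact h.symm)
  have hdvd3 : q ^ 2 - 1 ∣ i * (q + 1) := horder ▸ orderOf_dvd_iff_pow_eq_one.mpr hu2
  rw [myaux_fact hq4] at hdvd3
  have hdvd4 : q - 1 ∣ i := (Nat.mul_dvd_mul_iff_right (by omega : 0 < q + 1)).mp hdvd3
  have := Nat.le_of_dvd (by omega) hdvd4
  omega

lemma myaux_one (hq4 : 4 ≤ q) (horder : orderOf α = q ^ 2 - 1) :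
    (α : F) ^ (q ^ 2 - 1) = 1 := by
  have := pow_orderOf_eq_one α
  rw [horder] at this
  have := congrArg Units.val this
  simpa using this

lemma myaux_mem (hq4 : 4 ≤ q) (horder : orderOf α = q ^ 2 - 1)
    (hα : ∀ x : Fˣ, x ∈ Subgroup.zpowers α) {i : ℕ} (h1 : 1 ≤ i) (h2 : i ≤ q - 2) {x : F} :
    (x - 1) ^ (q + 1) = (α : F) ^ (i * (q + 1)) ↔
      ∃ j < q + 1, x = (α : F) ^ (i + (q - 1) * j) + 1 := by
  constructor
  · intro h
    have hx1 : x - 1 ≠ 0 := by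
      intro h0
      rw [h0, zero_pow (by omega : q + 1 ≠ 0)] at h
      exact pow_ne_zero _ (Units.ne_zero α) h.symm
    obtain ⟨s, hs, hsx⟩ := myaux_log horder hα hx1
    rw [← hsx, ← pow_mul] at h
    have hu : α ^ (s * (q + 1)) = α ^ (i * (q + 1)) := Units.ext (by push_cast; exact h)
    rw [pow_eq_pow_iff_modEq, horder] at hu
    have hz := (Int.natCast_modEq_iff.mpr hu).dvd
    rw [myaux_fact hq4] at hz
    push_cast [Nat.cast_sub (show 1 ≤ q by omega)] at hz
    have hz' : ((i : ℤ) - (s : ℤ)) * ((q : ℤ) + 1) = (i : ℤ) * ((q:ℤ) + 1) - (s : ℤ) * ((q:ℤ) + 1) := by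
      ring
    rw [← hz'] at hz
    have hz2 : ((q : ℤ) - 1) ∣ ((i : ℤ) - (s : ℤ)) :=
      (mul_dvd_mul_iff_right (by positivity : (0:ℤ) < (q:ℤ) + 1).ne').mp hz
    obtain ⟨t, ht⟩ := hz2
    have hq1ne : ((q : ℤ) + 1) ≠ 0 := (by positivity : (0:ℤ) < (q:ℤ) + 1).ne'
    set j : ℕ := ((-t) % ((q : ℤ) + 1)).toNat with hjdef
    have hj' : (j : ℤ) = (-t) % ((q : ℤ) + 1) := Int.toNat_of_nonneg (Int.emod_nonneg _ hq1ne)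
    have hlt : (-t) % ((q : ℤ) + 1) < (q : ℤ) + 1 := Int.emod_lt_of_pos _ (by positivity)
    have hjq : j < q + 1 := by omega
    have hte : (-t) % ((q : ℤ) + 1) + ((q : ℤ) + 1) * ((-t) / ((q : ℤ) + 1)) = -t :=
      Int.emod_add_mul_ediv _ _
    have hzz : α ^ ((i + (q - 1) * j : ℕ) : ℤ) = α ^ ((s : ℕ) : ℤ) := by
      rw [zpow_eq_zpow_iff_modEq, horder]
      refine Int.modEq_iff_dvd.mpr ?_
      rw [myaux_fact hq4]
      push_cast [Nat.cast_sub (show 1 ≤ q by omega)]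
      exact ⟨(-t) / ((q : ℤ) + 1), by
        linear_combination (-1 : ℤ) * ht - ((q : ℤ) - 1) * hj' - ((q : ℤ) - 1) * hte⟩
    rw [zpow_natCast, zpow_natCast] at hzz
    have hzz' : (α : F) ^ (i + (q - 1) * j) = (α : F) ^ s := by
      have := congrArg Units.val hzz
      simpa using this
    refine ⟨j, hjq, ?_⟩
    rw [hzz', hsx]
    ring
  · rintro ⟨j, hj, rfl⟩
    rw [add_sub_cancel_right, ← pow_mul,
      show (i + (q - 1) * j) * (q + 1) = i * (q + 1) + ((q - 1) * (q + 1)) * j by ring,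
      ← myaux_fact hq4, pow_add, pow_mul, pow_mul, myaux_one hq4 horder, one_pow, mul_one]

end MyAux

/-- Construction 2 inner code. Let `q = p^m ≥ 4` be a prime power, `F` the
finite field with `q²` elements, and `α` a generator of `Fˣ`. The sets
`B_i = {x ∈ F : (x-1)^{q+1} = α^{i(q+1)}}`, `i ∈ {1, …, q-2}`, each have `q + 1`
elements, are pairwise disjoint, and contain neither `0` nor `1`; consequently, via the
discrete logarithm base `α`, their indicator vectors form a binary constant-weight code
with parameters `(q² - 1, q - 2, q + 1, 0)`. -/


theorem construction2_inner_cwc {p m q : ℕ} (hp : p.Prime) (hm : 0 < m)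
    (hq : q = p ^ m) (hq4 : 4 ≤ q)
    (F : Type) [Field F] [Fintype F] [DecidableEq F]
    (hF : Fintype.card F = q ^ 2)
    (α : Fˣ) (hα : ∀ x : Fˣ, x ∈ Subgroup.zpowers α) :
    (∀ i ∈ Finset.Icc 1 (q - 2),
      (Finset.univ.filter
        (fun x : F => (x - 1) ^ (q + 1) = (α : F) ^ (i * (q + 1)))).card = q + 1) ∧
    (∀ i ∈ Finset.Icc 1 (q - 2), ∀ i' ∈ Finset.Icc 1 (q - 2), i ≠ i' →
      Disjoint
        (Finset.univ.filter
          (fun x : F => (x - 1) ^ (q + 1) = (α : F) ^ (i * (q + 1))))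
        (Finset.univ.filter
          (fun x : F => (x - 1) ^ (q + 1) = (α : F) ^ (i' * (q + 1))))) ∧
    (∀ i ∈ Finset.Icc 1 (q - 2),
      (0 : F) ∉ Finset.univ.filter
          (fun x : F => (x - 1) ^ (q + 1) = (α : F) ^ (i * (q + 1))) ∧
      (1 : F) ∉ Finset.univ.filter
          (fun x : F => (x - 1) ^ (q + 1) = (α : F) ^ (i * (q + 1)))) ∧
    IsCWC (q + 1) 0
      (fun (i : Fin (q - 2)) (s : Fin (q ^ 2 - 1)) =>
        decide (((α : F) ^ (s : ℕ) - 1) ^ (q + 1)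
          = (α : F) ^ (((i : ℕ) + 1) * (q + 1)))) := by
  have hcardU : Fintype.card Fˣ = q ^ 2 - 1 := by rw [Fintype.card_units, hF]
  have horder : orderOf α = q ^ 2 - 1 := by
    rw [orderOf_eq_card_of_forall_mem_zpowers hα, Nat.card_eq_fintype_card, hcardU]
  -- Part (a)
  have hScard : ∀ i : ℕ, 1 ≤ i → i ≤ q - 2 →
      (Finset.univ.filter
        (fun x : F => (x - 1) ^ (q + 1) = (α : F) ^ (i * (q + 1)))).card = q + 1 := by
    intro i h1 h2
    have hSeq : (Finset.univ.filter
        (fun x : F => (x - 1) ^ (q + 1) = (α : F) ^ (i * (q + 1)))) =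
        Finset.image (fun j : ℕ => (α : F) ^ (i + (q - 1) * j) + 1) (Finset.range (q + 1)) := by
      ext x
      simp only [Finset.mem_filter, Finset.mem_univ, true_and, Finset.mem_image,
        Finset.mem_range]
      rw [myaux_mem hq4 horder hα h1 h2]
      constructor
      · rintro ⟨j, hj, hx⟩; exact ⟨j, hj, hx.symm⟩
      · rintro ⟨j, hj, hx⟩; exact ⟨j, hj, hx.symm⟩
    rw [hSeq, Finset.card_image_of_injOn, Finset.card_range]
    intro j hj j' hj' hjj
    simp only [Finset.coe_range, Set.mem_Iio] at hj hj'
    have h3 : (α : F) ^ (i + (q - 1) * j) = (α : F) ^ (i + (q - 1) * j') := by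
      have := add_right_cancel hjj
      exact this
    have h4 := myaux_inj horder (myaux_lt2 hq4 h2 hj) (myaux_lt2 hq4 h2 hj') h3
    have hq1 : 0 < q - 1 := by omega
    exact Nat.eq_of_mul_eq_mul_left hq1 (by omega)
  -- zero / one exclusion
  have hz : ∀ i : ℕ, 1 ≤ i → i ≤ q - 2 →
      ((0 : F) - 1) ^ (q + 1) ≠ (α : F) ^ (i * (q + 1)) := fun i h1 h2 =>
    myaux_zero hq4 horder h1 h2
  have hwt : ∀ i : Fin (q - 2), cwWeight
      (fun s : Fin (q ^ 2 - 1) => decide (((α : F) ^ (s : ℕ) - 1) ^ (q + 1)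
        = (α : F) ^ (((i : ℕ) + 1) * (q + 1)))) = q + 1 := by
    intro i
    have hb1 : 1 ≤ (i : ℕ) + 1 := by omega
    have hb2 : (i : ℕ) + 1 ≤ q - 2 := by have := i.isLt; omega
    unfold cwWeight
    simp only [decide_eq_true_eq]
    have hinjOn : Set.InjOn (fun s : Fin (q ^ 2 - 1) => (α : F) ^ (s : ℕ))
        ↑(Finset.univ.filter (fun s : Fin (q ^ 2 - 1) =>
          ((α : F) ^ (s : ℕ) - 1) ^ (q + 1) = (α : F) ^ (((i : ℕ) + 1) * (q + 1)))) := by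
      intro s _ s' _ hss
      exact Fin.ext (myaux_inj horder s.isLt s'.isLt hss)
    have himg : Finset.image (fun s : Fin (q ^ 2 - 1) => (α : F) ^ (s : ℕ))
        (Finset.univ.filter (fun s : Fin (q ^ 2 - 1) =>
          ((α : F) ^ (s : ℕ) - 1) ^ (q + 1) = (α : F) ^ (((i : ℕ) + 1) * (q + 1)))) =
        Finset.univ.filter
          (fun x : F => (x - 1) ^ (q + 1) = (α : F) ^ (((i : ℕ) + 1) * (q + 1))) := by
      ext x
      simp only [Finset.mem_image, Finset.mem_filter, Finset.mem_univ, true_and]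
      constructor
      · rintro ⟨s, hs, rfl⟩; exact hs
      · intro hx
        have hx0 : x ≠ 0 := by
          rintro rfl
          exact hz _ hb1 hb2 hx
        obtain ⟨s, hs, hsx⟩ := myaux_log horder hα hx0
        exact ⟨⟨s, hs⟩, by rw [hsx]; exact hsx ▸ hx, hsx⟩
    have := Finset.card_image_of_injOn hinjOn
    rw [himg] at this
    rw [← this, hScard _ hb1 hb2]
  refine ⟨?_, ?_, ?_, ?_⟩
  · intro i hi
    rw [Finset.mem_Icc] at hi
    exact hScard i hi.1 hi.2
  · intro i hi i' hi' hne
    rw [Finset.mem_Icc] at hi hi'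
    rw [Finset.disjoint_left]
    intro x hx hx'
    simp only [Finset.mem_filter, Finset.mem_univ, true_and] at hx hx'
    exact hne (myaux_key hq4 horder hi.2 hi'.2 (hx.symm.trans hx'))
  · intro i hi
    rw [Finset.mem_Icc] at hi
    constructor
    · simp only [Finset.mem_filter, Finset.mem_univ, true_and]
      exact hz i hi.1 hi.2
    · simp only [Finset.mem_filter, Finset.mem_univ, true_and, sub_self,
        zero_pow (show q + 1 ≠ 0 by omega)]
      exact fun h => pow_ne_zero _ (Units.ne_zero α) h.symm
  · refine ⟨?_, hwt, ?_⟩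
    · -- Injectivity
      intro i i' h
      by_contra hne
      have hb2 : (i : ℕ) + 1 ≤ q - 2 := by have := i.isLt; omega
      have hb2' : (i' : ℕ) + 1 ≤ q - 2 := by have := i'.isLt; omega
      have hpos : 0 < cwWeight
          (fun s : Fin (q ^ 2 - 1) => decide (((α : F) ^ (s : ℕ) - 1) ^ (q + 1)
            = (α : F) ^ (((i : ℕ) + 1) * (q + 1)))) := by rw [hwt i]; omega
      unfold cwWeight at hpos
      obtain ⟨s, hs⟩ := Finset.card_pos.mp hpos
      simp only [Finset.mem_filter, Finset.mem_univ, true_and, decide_eq_true_eq] at hs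
      have hs' : ((α : F) ^ (s : ℕ) - 1) ^ (q + 1)
          = (α : F) ^ (((i' : ℕ) + 1) * (q + 1)) :=
        of_decide_eq_true ((congrFun h s).symm.trans (decide_eq_true hs))
      have := myaux_key hq4 horder hb2 hb2' (hs.symm.trans hs')
      exact hne (Fin.ext (by omega))
    · -- overlap
      intro i i' hne
      have hb2 : (i : ℕ) + 1 ≤ q - 2 := by have := i.isLt; omega
      have hb2' : (i' : ℕ) + 1 ≤ q - 2 := by have := i'.isLt; omega
      unfold cwOverlap
      refine le_of_eq (Finset.card_eq_zero.mpr ?_)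
      rw [Finset.filter_eq_empty_iff]
      rintro s -
      simp only [decide_eq_true_eq, not_and]
      intro h1 h2
      have := myaux_key hq4 horder hb2 hb2' (h1.symm.trans h2)
      exact hne (Fin.ext (by omega))
end

section
/- Let p be a prime, m a positive integer, q = p^m, and suppose q − 2 is a prime power. Let k_o, k_oo be integers with 1 ≤ k_o ≤ q − 4 and 1 ≤ k_oo ≤ (q−2)^{k_o} − 2. Then there exists a binary constant-weight code with parameters S = (q² − 1)(q − 3)((q−2)^{k_o} − 1), N = (q−2)^{k_o·k_oo}, W = (q+1)(q−3)((q−2)^{k_o} − 1), and K = (q+1)(q−3)(k_oo − 1) + (q+1)(k_o − 1)((q−2)^{k_o} − 1). Such a code is obtained by concatenating the (q²−1, q−2, q+1, 0) binary constant-weight code of Construction 2 with an outer [q−3, k_o] Reed–Solomon code over GF(q−2) and then with an outer [(q−2)^{k_o}−1, k_oo] Reed–Solomon code over GF((q−2)^{k_o}). -/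
open Finset Function

/-- Evaluation of the polynomial with coefficient vector `f` at `x`. -/
def pev {F : Type*} [CommSemiring F] {k : ℕ} (f : Fin k → F) (x : F) : F :=
  ∑ i, f i * x ^ (i : ℕ)

lemma polyAgree {F : Type*} [Field F] [DecidableEq F] {k nn : ℕ}
    (pt : Fin nn → F) (hpt : Function.Injective pt) {f g : Fin k → F} (hfg : f ≠ g) :
    (Finset.univ.filter (fun pp : Fin nn =>
      pev f (pt pp) = pev g (pt pp))).card ≤ k - 1 := by
  classical
  simp only [pev]
  set P : Polynomial F := ∑ i : Fin k, Polynomial.C (f i - g i) * Polynomial.X ^ (i : ℕ) with hP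
  have hcoeff : ∀ i : Fin k, P.coeff i = f i - g i := by
    intro i
    rw [hP, Polynomial.finset_sum_coeff]
    rw [Finset.sum_eq_single i]
    · rw [Polynomial.coeff_C_mul, Polynomial.coeff_X_pow]; simp
    · intro b _ hb
      have hne : (i : ℕ) ≠ (b : ℕ) := fun h => hb (Fin.ext h.symm)
      rw [Polynomial.coeff_C_mul, Polynomial.coeff_X_pow, if_neg hne, mul_zero]
    · simp
  have hPne : P ≠ 0 := by
    obtain ⟨i, hi⟩ := Function.ne_iff.mp hfg
    intro h
    apply hi
    have h2 := hcoeff i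
    rw [h, Polynomial.coeff_zero] at h2
    exact sub_eq_zero.mp h2.symm
  have hdeg : P.natDegree ≤ k - 1 := by
    apply Polynomial.natDegree_sum_le_of_forall_le
    intro i _
    exact le_trans (Polynomial.natDegree_C_mul_X_pow_le _ _) (Nat.le_sub_one_of_lt i.2)
  have heval : ∀ x : F, P.eval x = (∑ i, f i * x ^ (i : ℕ)) - ∑ i, g i * x ^ (i : ℕ) := by
    intro x
    rw [hP]
    simp [Polynomial.eval_finset_sum, sub_mul, Finset.sum_sub_distrib]
  set s := Finset.univ.filter (fun pp : Fin nn =>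
      ∑ i, f i * pt pp ^ (i : ℕ) = ∑ i, g i * pt pp ^ (i : ℕ)) with hs
  have hroot : ∀ pp ∈ s, pt pp ∈ P.roots.toFinset := by
    intro pp hpp
    rw [hs, Finset.mem_filter] at hpp
    rw [Multiset.mem_toFinset, Polynomial.mem_roots hPne, Polynomial.IsRoot, heval]
    exact sub_eq_zero.mpr hpp.2
  calc s.card = (s.image pt).card := (Finset.card_image_of_injective s hpt).symm
    _ ≤ P.roots.toFinset.card := Finset.card_le_card (by
        intro x hx
        obtain ⟨pp, hpp, rfl⟩ := Finset.mem_image.mp hx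
        exact hroot pp hpp)
    _ ≤ Multiset.card P.roots := Multiset.toFinset_card_le _
    _ ≤ P.natDegree := Polynomial.card_roots' P
    _ ≤ k - 1 := hdeg

lemma polyDisagree {F : Type*} [Field F] [DecidableEq F] {k nn : ℕ} (pt : Fin nn ↪ F)
    {f g : Fin k → F} (hfg : f ≠ g) (hk : k - 1 < nn) :
    ∃ pp : Fin nn, pev f (pt pp) ≠ pev g (pt pp) := by
  by_contra h
  push_neg at h
  have huniv : (Finset.univ.filter (fun pp : Fin nn =>
      pev f (pt pp) = pev g (pt pp))) = Finset.univ := by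
    ext pp; simp [h pp]
  have h2 := polyAgree (fun pp => pt pp) pt.injective hfg
  rw [huniv] at h2
  simp only [Finset.card_univ, Fintype.card_fin] at h2
  omega

/-- The inner code: symbol `a` is encoded as the indicator of the block
`{emb (a, l) | l}`. -/
def innerEnc {F : Type*} {P LL : ℕ} (emb : F × Fin P ↪ Fin LL) (a : F) (t : Fin LL) : Bool :=
  decide (∃ l : Fin P, emb (a, l) = t)

lemma concat_cwc {F F' : Type*} [Field F] [Field F'] [Fintype F] [Fintype F']
    [DecidableEq F] [DecidableEq F']
    {LL P MM n1 ko koo NN SS : ℕ}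
    (emb : F × Fin P ↪ Fin LL) (pt1 : Fin n1 ↪ F) (pt2 : Fin MM ↪ F')
    (eF' : F' ≃ (Fin ko → F)) (eMsg : Fin NN ≃ (Fin koo → F'))
    (eσ : Fin SS ≃ (Fin MM × Fin n1 × Fin LL))
    (hP : 0 < P) (hko : ko - 1 < n1) (hkoo : koo - 1 < MM) :
    ∃ x : Fin NN → Fin SS → Bool,
      IsCWC (P * n1 * MM) (P * n1 * (koo - 1) + P * (ko - 1) * MM) x := by
  classical
  have inner_w : ∀ a : F,
      (Finset.univ.filter (fun t => innerEnc emb a t = true)).card = P := by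
    intro a
    have himg : Finset.univ.filter (fun t => innerEnc emb a t = true)
        = Finset.univ.image (fun l : Fin P => emb (a, l)) := by
      ext t
      simp only [innerEnc, Finset.mem_filter, Finset.mem_univ, true_and,
        decide_eq_true_eq, Finset.mem_image]
    rw [himg, Finset.card_image_of_injective _
      (fun l l' h => congrArg Prod.snd (emb.injective h)),
      Finset.card_univ, Fintype.card_fin]
  have hblock : ∀ a b : F,
      (∑ t : Fin LL, if innerEnc emb a t = true ∧ innerEnc emb b t = true then 1 else 0)
        = if a = b then P else 0 := by
    intro a b
    by_cases hab : a = b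
    · subst hab
      rw [if_pos rfl]
      simp only [and_self]
      rw [← Finset.card_filter]
      exact inner_w a
    · rw [if_neg hab, ← Finset.card_filter]
      rw [Finset.card_eq_zero]
      ext t
      simp only [Finset.mem_filter, Finset.mem_univ, true_and, Finset.notMem_empty,
        iff_false, not_and, innerEnc, decide_eq_true_eq]
      rintro ⟨l, rfl⟩ ⟨l', h⟩
      exact hab (congrArg Prod.fst (emb.injective h)).symm
  have hinnersum : ∀ a : F, (∑ t : Fin LL, if innerEnc emb a t = true then 1 else 0) = P := by
    intro a
    rw [← Finset.card_filter]
    exact inner_w a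
  refine ⟨fun j s => innerEnc emb
    (pev (eF' (pev (eMsg j) (pt2 (eσ s).1))) (pt1 (eσ s).2.1)) (eσ s).2.2, ?_, ?_, ?_⟩
  · -- injectivity
    intro j j' h
    by_contra hne
    have hmsg : eMsg j ≠ eMsg j' := fun hh => hne (eMsg.injective hh)
    obtain ⟨pp, hpp⟩ := polyDisagree pt2 hmsg hkoo
    have hfg : eF' (pev (eMsg j) (pt2 pp)) ≠ eF' (pev (eMsg j') (pt2 pp)) :=
      fun hh => hpp (eF'.injective hh)
    obtain ⟨c, hc⟩ := polyDisagree pt1 hfg hko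
    set a := pev (eF' (pev (eMsg j) (pt2 pp))) (pt1 c) with ha
    set b := pev (eF' (pev (eMsg j') (pt2 pp))) (pt1 c) with hb
    set t0 : Fin LL := emb (a, ⟨0, hP⟩) with ht0
    have hat : innerEnc emb a t0 = true := by
      simp only [innerEnc, decide_eq_true_eq]
      exact ⟨⟨0, hP⟩, rfl⟩
    have hbt : innerEnc emb b t0 = false := by
      simp only [innerEnc, decide_eq_false_iff_not, not_exists]
      intro l hl
      have h2 : (b, l) = (a, ⟨0, hP⟩) := emb.injective hl
      exact hc (congrArg Prod.fst h2).symm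
    have heq := congrFun h (eσ.symm (pp, c, t0))
    simp only [Equiv.apply_symm_apply] at heq
    rw [← ha, ← hb] at heq
    rw [hat, hbt] at heq
    simp at heq
  · -- weight
    intro j
    simp only [cwWeight]
    rw [Finset.card_filter]
    rw [Fintype.sum_equiv eσ _
      (fun s' : Fin MM × Fin n1 × Fin LL =>
        if innerEnc emb (pev (eF' (pev (eMsg j) (pt2 s'.1))) (pt1 s'.2.1)) s'.2.2 = true
        then 1 else 0)
      (fun s => rfl)]
    simp only [Fintype.sum_prod_type]
    simp_rw [hinnersum]
    simp only [Finset.sum_const, Finset.card_univ, Fintype.card_fin, smul_eq_mul]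
    ring
  · -- overlap
    intro j j' hjj
    have hmsg : eMsg j ≠ eMsg j' := fun hh => hjj (eMsg.injective hh)
    simp only [cwOverlap]
    rw [Finset.card_filter]
    rw [Fintype.sum_equiv eσ _
      (fun s' : Fin MM × Fin n1 × Fin LL =>
        if (innerEnc emb (pev (eF' (pev (eMsg j) (pt2 s'.1))) (pt1 s'.2.1)) s'.2.2 = true ∧
            innerEnc emb (pev (eF' (pev (eMsg j') (pt2 s'.1))) (pt1 s'.2.1)) s'.2.2 = true)
        then 1 else 0)
      (fun s => rfl)]
    simp only [Fintype.sum_prod_type]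
    simp_rw [hblock]
    have hpos : ∀ pp : Fin MM,
        (∑ c : Fin n1, if pev (eF' (pev (eMsg j) (pt2 pp))) (pt1 c)
            = pev (eF' (pev (eMsg j') (pt2 pp))) (pt1 c) then P else 0)
          ≤ if pev (eMsg j) (pt2 pp) = pev (eMsg j') (pt2 pp)
            then n1 * P else (ko - 1) * P := by
      intro pp
      by_cases hpp : pev (eMsg j) (pt2 pp) = pev (eMsg j') (pt2 pp)
      · rw [if_pos hpp]
        calc (∑ c : Fin n1, if pev (eF' (pev (eMsg j) (pt2 pp))) (pt1 c)
              = pev (eF' (pev (eMsg j') (pt2 pp))) (pt1 c) then P else 0)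
            ≤ ∑ _c : Fin n1, P := Finset.sum_le_sum (fun c _ => by split <;> omega)
          _ = n1 * P := by
              simp [Finset.sum_const, Finset.card_univ, Fintype.card_fin]
      · rw [if_neg hpp, Finset.sum_ite, Finset.sum_const, Finset.sum_const_zero, add_zero,
          smul_eq_mul]
        have hfg : eF' (pev (eMsg j) (pt2 pp)) ≠ eF' (pev (eMsg j') (pt2 pp)) :=
          fun hh => hpp (eF'.injective hh)
        have hagree := polyAgree (fun c => pt1 c) pt1.injective hfg
        exact Nat.mul_le_mul_right P hagree
    refine le_trans (Finset.sum_le_sum fun pp _ => hpos pp) ?_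
    rw [Finset.sum_ite, Finset.sum_const, Finset.sum_const, smul_eq_mul, smul_eq_mul]
    have h1 : (Finset.univ.filter (fun pp : Fin MM =>
        pev (eMsg j) (pt2 pp) = pev (eMsg j') (pt2 pp))).card ≤ koo - 1 :=
      polyAgree (fun pp => pt2 pp) pt2.injective hmsg
    have h2 : (Finset.univ.filter (fun pp : Fin MM =>
        ¬(pev (eMsg j) (pt2 pp) = pev (eMsg j') (pt2 pp)))).card ≤ MM :=
      le_trans (Finset.card_le_card (Finset.filter_subset _ _)) (by simp)
    calc _ ≤ (koo - 1) * (n1 * P) + MM * ((ko - 1) * P) :=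
          Nat.add_le_add (Nat.mul_le_mul_right _ h1) (Nat.mul_le_mul_right _ h2)
      _ = P * n1 * (koo - 1) + P * (ko - 1) * MM := by ring

/-- Construction 2 concatenated with two outer Reed–Solomon codes. For a
prime power `q = p^m` such that `q - 2` is also a prime power, and
`1 ≤ k_o ≤ q - 4`, `1 ≤ k_oo ≤ (q-2)^{k_o} - 2`, there exists a binary constant-weight
code with parameters `S = (q² - 1)(q - 3)((q-2)^{k_o} - 1)`, `N = (q-2)^{k_o k_oo}`,
`W = (q+1)(q-3)((q-2)^{k_o} - 1)`, and
`K = (q+1)(q-3)(k_oo - 1) + (q+1)(k_o - 1)((q-2)^{k_o} - 1)`. -/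
theorem construction2_rs_cwc {p m q ko koo : ℕ} (hp : p.Prime) (hm : 0 < m)
    (hq : q = p ^ m) (hq2 : ∃ r n : ℕ, r.Prime ∧ 0 < n ∧ q - 2 = r ^ n)
    (hko1 : 1 ≤ ko) (hko2 : ko ≤ q - 4)
    (hkoo1 : 1 ≤ koo) (hkoo2 : koo ≤ (q - 2) ^ ko - 2) :
    ∃ x : Fin ((q - 2) ^ (ko * koo)) →
        Fin ((q ^ 2 - 1) * (q - 3) * ((q - 2) ^ ko - 1)) → Bool,
      IsCWC ((q + 1) * (q - 3) * ((q - 2) ^ ko - 1))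
        ((q + 1) * (q - 3) * (koo - 1) + (q + 1) * (ko - 1) * ((q - 2) ^ ko - 1)) x := by
  classical
  obtain ⟨r, n, hr, hn, hQeq⟩ := hq2
  haveI : Fact r.Prime := ⟨hr⟩
  have hq5 : 5 ≤ q := by omega
  have hQ2 : 2 ≤ q - 2 := by
    rw [hQeq]
    calc 2 ≤ r := hr.two_le
      _ ≤ r ^ n := Nat.le_self_pow (by omega) r
  have hQko : 3 ≤ (q - 2) ^ ko := by
    have h2 := hkoo2
    generalize (q - 2) ^ ko = X at h2 ⊢
    omega
  set F := GaloisField r n with hF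
  set F' := GaloisField r (n * ko) with hF'
  haveI : Fintype F := Fintype.ofFinite F
  haveI : Fintype F' := Fintype.ofFinite F'
  have hcF : Fintype.card F = q - 2 := by
    rw [← Nat.card_eq_fintype_card, hF, GaloisField.card r n (by omega)]
    exact hQeq.symm
  have hcF' : Fintype.card F' = (q - 2) ^ ko := by
    rw [← Nat.card_eq_fintype_card, hF', GaloisField.card r (n * ko) (Nat.mul_ne_zero (by omega) (by omega))]
    rw [pow_mul, ← hQeq]
  obtain ⟨emb⟩ : Nonempty (F × Fin (q + 1) ↪ Fin (q ^ 2 - 1)) := by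
    apply Function.Embedding.nonempty_of_card_le
    rw [Fintype.card_prod, hcF, Fintype.card_fin, Fintype.card_fin]
    obtain ⟨a, rfl⟩ : ∃ a, q = a + 5 := ⟨q - 5, by omega⟩
    have h1 : (a + 5) ^ 2 = a * a + 10 * a + 25 := by ring
    have h2 : (a + 5 - 2) * (a + 5 + 1) = a * a + 9 * a + 18 := by
      rw [show a + 5 - 2 = a + 3 by omega]; ring
    rw [h1, h2]
    set b := a * a with hb
    omega
  obtain ⟨pt1⟩ : Nonempty (Fin (q - 3) ↪ F) := by
    apply Function.Embedding.nonempty_of_card_le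
    rw [Fintype.card_fin, hcF]; omega
  obtain ⟨pt2⟩ : Nonempty (Fin ((q - 2) ^ ko - 1) ↪ F') := by
    apply Function.Embedding.nonempty_of_card_le
    rw [Fintype.card_fin, hcF']; omega
  have eF' : F' ≃ (Fin ko → F) := Fintype.equivOfCardEq (by
    rw [hcF', Fintype.card_fun, hcF, Fintype.card_fin])
  have eMsg : Fin ((q - 2) ^ (ko * koo)) ≃ (Fin koo → F') := Fintype.equivOfCardEq (by
    rw [Fintype.card_fin, Fintype.card_fun, hcF', Fintype.card_fin, ← pow_mul])
  have eσ : Fin ((q ^ 2 - 1) * (q - 3) * ((q - 2) ^ ko - 1))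
      ≃ (Fin ((q - 2) ^ ko - 1) × Fin (q - 3) × Fin (q ^ 2 - 1)) := Fintype.equivOfCardEq (by
    simp only [Fintype.card_fin, Fintype.card_prod]
    ring)
  have hkooM : koo - 1 < (q - 2) ^ ko - 1 := by
    have h2 := hkoo2; have h3 := hQko
    generalize (q - 2) ^ ko = X at h2 h3 ⊢
    omega
  exact concat_cwc emb pt1 pt2 eF' eMsg eσ (by omega) (by omega) hkooM
end
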